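/- arXiv:math/0210023 — 6 statements merged into one kernel-verified Lean document; each statement's English description precedes it below -/
import Mathlib

section
/- Let τ = τ⁰-τ¹-⋯-τˢ and φ = φ⁰-φ¹-⋯-φˢ be multi-patterns such that the sequence of blocks (φ⁰, φ¹, …, φˢ) is a permutation of the sequence of blocks (τ⁰, τ¹, …, τˢ). Then for every n ≥ 0 and k ≥ 1, the number of k-ary words of length n avoiding τ equals the number of k-ary words of length n avoiding φ. -/
/-- A word `σ : Fin n → Fin k` has an occurrence of the subword pattern `p : Fin m → Fin l`
at position `i` if `i + m ≤ n` and the corresponding letters are order-isomorphic to `p`. -/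
def OccursAt {m l n k : ℕ} (p : Fin m → Fin l) (σ : Fin n → Fin k) (i : ℕ) : Prop :=
  ∃ h : i + m ≤ n, ∀ a b : Fin m,
    (σ ⟨i + a, lt_of_lt_of_le (Nat.add_lt_add_left a.isLt i) h⟩ <
      σ ⟨i + b, lt_of_lt_of_le (Nat.add_lt_add_left b.isLt i) h⟩) ↔ p a < p b

/-- `σ` avoids the subword pattern `p`. -/
def AvoidsPat {m l n k : ℕ} (p : Fin m → Fin l) (σ : Fin n → Fin k) : Prop :=
  ∀ i : ℕ, ¬ OccursAt p σ i

/-- `σ` contains the multi-pattern `τ⁰-τ¹-⋯` (blocks indexed by `Fin s`): there are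
positions `i j`, with each block's occurrence ending before the next block's start,
such that `τ j` occurs at `i j` for every `j`. -/
def ContainsMulti {s : ℕ} {m r : Fin s → ℕ} (τ : ∀ j : Fin s, Fin (m j) → Fin (r j))
    {n k : ℕ} (σ : Fin n → Fin k) : Prop :=
  ∃ i : Fin s → ℕ,
    (∀ (j : Fin s) (h : (j : ℕ) + 1 < s), i j + m j ≤ i ⟨(j : ℕ) + 1, h⟩) ∧
      ∀ j : Fin s, OccursAt (τ j) σ (i j)

/-!
Scan a word from the left and cut it right after the first occurrence of the first block `τ⁰`.
The word contains `τ⁰-τ¹-⋯-τˢ` iff the suffix after the cut contains `τ¹-⋯-τˢ`, since moving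
an occurrence of `τ⁰` to the left only frees room for the remaining blocks. As the prefix and
suffix can be chosen independently, the generating function of words containing the
multi-pattern is `F₀(x) ⋯ Fₛ(x) / (1 - k x)`, where `Fⱼ` counts the words whose first occurrence
of `τʲ` ends at their last letter. This product does not depend on the order of the blocks.
-/

open Finset PowerSeries

open scoped Classical

section Words

variable {α : Type*} {n : ℕ}

def dropWord (t : ℕ) (σ : Fin n → α) : Fin (n - t) → α :=
  fun a => σ ⟨t + a, by have := a.isLt; omega⟩

def takeDropEquiv (t : ℕ) (ht : t ≤ n) : (Fin n → α) ≃ (Fin t → α) × (Fin (n - t) → α) where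
  toFun σ := (Fin.take t ht σ, dropWord t σ)
  invFun w a := if h : (a : ℕ) < t then w.1 ⟨a, h⟩ else w.2 ⟨a - t, by omega⟩
  left_inv σ := by
    funext a
    by_cases h : (a : ℕ) < t
    · simp [h, Fin.take_apply, Fin.castLE]
    · simp [h, dropWord, Nat.add_sub_cancel' (not_lt.mp h)]
  right_inv w := by
    ext a
    · simp [Fin.take_apply, Fin.castLE]
    · simp [dropWord]

theorem card_filter_take_and_dropWord [Fintype α] (t : ℕ) (ht : t ≤ n)
    (P : (Fin t → α) → Prop) (Q : (Fin (n - t) → α) → Prop) :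
    #{σ : Fin n → α | P (Fin.take t ht σ) ∧ Q (dropWord t σ)} = #{w | P w} * #{v | Q v} := by
  rw [← Fintype.card_subtype, ← Fintype.card_subtype, ← Fintype.card_subtype,
    ← Fintype.card_prod]
  exact Fintype.card_congr
    (((takeDropEquiv t ht).subtypeEquiv fun _ => Iff.rfl).trans Equiv.subtypeProdEquivProd)

theorem card_filter_exists_take_and_dropWord [Fintype α]
    (P : ∀ t, (Fin t → α) → Prop) (Q : ∀ u, (Fin u → α) → Prop)
    (hP : ∀ (σ : Fin n → α) (t t' : Fin (n + 1)),
      P t (Fin.take t t.is_le σ) → P t' (Fin.take t' t'.is_le σ) → t = t') :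
    #{σ : Fin n → α | ∃ t : Fin (n + 1), P t (Fin.take t t.is_le σ) ∧ Q _ (dropWord t σ)} =
      ∑ t : Fin (n + 1), #{w : Fin t → α | P t w} * #{v : Fin (n - t) → α | Q _ v} := by
  have hunion : ({σ | ∃ t : Fin (n + 1), P t (Fin.take t t.is_le σ) ∧ Q _ (dropWord t σ)} :
      Finset (Fin n → α)) =
      univ.biUnion fun t : Fin (n + 1) =>
        {σ | P t (Fin.take t t.is_le σ) ∧ Q _ (dropWord t σ)} := by
    ext σ
    simp
  rw [hunion, card_biUnion]
  · exact sum_congr rfl fun t _ => card_filter_take_and_dropWord t t.is_le _ _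
  · intro t _ t' _ hne
    simp only [Function.onFun, disjoint_left, mem_filter, mem_univ, true_and]
    exact fun σ hσ hσ' => hne (hP σ t t' hσ.1 hσ'.1)

end Words

section Occurrences

variable {m l n k : ℕ} (p : Fin m → Fin l) (σ : Fin n → Fin k)

theorem occursAt_take {t : ℕ} (ht : t ≤ n) {i : ℕ} (hi : i + m ≤ t) :
    OccursAt p (Fin.take t ht σ) i ↔ OccursAt p σ i :=
  ⟨fun ⟨_, hc⟩ => ⟨hi.trans ht, hc⟩, fun ⟨_, hc⟩ => ⟨hi, hc⟩⟩

theorem occursAt_dropWord {t : ℕ} (ht : t ≤ n) (i : ℕ) :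
    OccursAt p (dropWord t σ) i ↔ OccursAt p σ (t + i) := by
  simp only [OccursAt, dropWord, Nat.add_assoc]
  exact ⟨fun ⟨_, hc⟩ => ⟨by omega, hc⟩, fun ⟨_, hc⟩ => ⟨by omega, hc⟩⟩

def IsFirstOccAt (i : ℕ) : Prop :=
  OccursAt p σ i ∧ ∀ j < i, ¬ OccursAt p σ j

variable {p σ} in
theorem IsFirstOccAt.unique {i j : ℕ} (hi : IsFirstOccAt p σ i) (hj : IsFirstOccAt p σ j) :
    i = j := by
  by_contra hne
  rcases Nat.lt_or_gt_of_ne hne with h | h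
  · exact hj.2 i h hi.1
  · exact hi.2 j h hj.1

variable {p σ} in
theorem exists_isFirstOccAt_le {i : ℕ} (h : OccursAt p σ i) :
    ∃ i₀ ≤ i, IsFirstOccAt p σ i₀ :=
  ⟨Nat.find ⟨i, h⟩, Nat.find_min' _ h, Nat.find_spec ⟨i, h⟩, fun _ hj => Nat.find_min _ hj⟩

/-- The first occurrence of `p` in `w` ends at the last letter of `w`. An occurrence at `t - m`
forces `m ≤ t`, so the truncated subtraction is harmless. -/
def EndsWithFirstOcc {t : ℕ} (w : Fin t → Fin k) : Prop :=
  IsFirstOccAt p w (t - m)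

theorem endsWithFirstOcc_take_iff {t : ℕ} (ht : t ≤ n) :
    EndsWithFirstOcc p (Fin.take t ht σ) ↔ m ≤ t ∧ IsFirstOccAt p σ (t - m) := by
  constructor
  · rintro ⟨hocc, hmin⟩
    have hmt : m ≤ t := by have := hocc.1; omega
    exact ⟨hmt, (occursAt_take p σ ht (by omega)).1 hocc,
      fun j hj h => hmin j hj ((occursAt_take p σ ht (by omega)).2 h)⟩
  · rintro ⟨hmt, hocc, hmin⟩
    exact ⟨(occursAt_take p σ ht (by omega)).2 hocc,
      fun j hj h => hmin j hj ((occursAt_take p σ ht (by omega)).1 h)⟩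

end Occurrences

section MultiPatterns

variable {s n k : ℕ}

theorem containsMulti_fin_zero {m r : Fin 0 → ℕ} (τ : ∀ j : Fin 0, Fin (m j) → Fin (r j))
    (σ : Fin n → Fin k) : ContainsMulti τ σ :=
  ⟨Fin.elim0, fun j => j.elim0, fun j => j.elim0⟩

theorem ContainsMulti.dropWord_of_le {m r : Fin s → ℕ}
    {τ : ∀ j : Fin s, Fin (m j) → Fin (r j)} {σ : Fin n → Fin k} {t t' : ℕ}
    (htt' : t ≤ t') (ht' : t' ≤ n) (h : ContainsMulti τ (dropWord t' σ)) :
    ContainsMulti τ (dropWord t σ) := by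
  obtain ⟨pos, hchain, hocc⟩ := h
  refine ⟨fun j => t' - t + pos j, fun j hj => by have := hchain j hj; dsimp only; omega,
    fun j => ?_⟩
  rw [occursAt_dropWord _ _ (htt'.trans ht'), show t + (t' - t + pos j) = t' + pos j by omega]
  exact (occursAt_dropWord _ _ ht' _).1 (hocc j)

theorem add_le_of_chain {m : Fin (s + 1) → ℕ} {pos : Fin (s + 1) → ℕ}
    (hchain : ∀ (j : Fin (s + 1)) (h : (j : ℕ) + 1 < s + 1), pos j + m j ≤ pos ⟨j + 1, h⟩)
    (j : Fin s) : pos 0 + m 0 ≤ pos j.succ := by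
  obtain ⟨v, hv⟩ := j
  induction v with
  | zero => exact hchain 0 (by simpa using hv)
  | succ v ih =>
    have hprev : pos 0 + m 0 ≤ pos ⟨v + 1, by omega⟩ := ih (by omega)
    have hstep : pos ⟨v + 1, by omega⟩ + m ⟨v + 1, by omega⟩ ≤ pos ⟨v + 1 + 1, by omega⟩ :=
      hchain ⟨v + 1, by omega⟩ (by simp only; omega)
    show pos 0 + m 0 ≤ pos ⟨v + 1 + 1, by omega⟩
    omega

theorem containsMulti_succ_iff {m r : Fin (s + 1) → ℕ}
    (τ : ∀ j : Fin (s + 1), Fin (m j) → Fin (r j)) (σ : Fin n → Fin k) :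
    ContainsMulti τ σ ↔ ∃ i, OccursAt (τ 0) σ i ∧
      ContainsMulti (fun j : Fin s => τ j.succ) (dropWord (i + m 0) σ) := by
  constructor
  · rintro ⟨pos, hchain, hocc⟩
    have ht : pos 0 + m 0 ≤ n := (hocc 0).1
    have hle := add_le_of_chain hchain
    refine ⟨pos 0, hocc 0, fun j => pos j.succ - (pos 0 + m 0), fun j hj => ?_, fun j => ?_⟩
    · obtain ⟨v, hv⟩ := j
      have hv1 : v + 1 < s := hj
      have hstep : pos ⟨v + 1, by omega⟩ + m ⟨v + 1, by omega⟩ ≤ pos ⟨v + 1 + 1, by omega⟩ :=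
        hchain ⟨v + 1, by omega⟩ (by simp only; omega)
      have hfirst : pos 0 + m 0 ≤ pos ⟨v + 1, by omega⟩ := hle ⟨v, hv⟩
      show pos ⟨v + 1, _⟩ - (pos 0 + m 0) + m ⟨v + 1, _⟩ ≤ pos ⟨v + 1 + 1, _⟩ - (pos 0 + m 0)
      omega
    · rw [occursAt_dropWord _ _ ht, Nat.add_sub_cancel' (hle j)]
      exact hocc j.succ
  · rintro ⟨i, hocc₀, pos, hchain, hocc⟩
    have ht : i + m 0 ≤ n := hocc₀.1
    refine ⟨Fin.cons i fun j => i + m 0 + pos j, fun j hj => ?_, fun j => ?_⟩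
    · obtain ⟨v, hv⟩ := j
      cases v with
      | zero =>
        show i + m 0 ≤ i + m 0 + pos ⟨0, by omega⟩
        omega
      | succ v =>
        have hv1 : v + 1 < s := by simp only at hj; omega
        have : pos ⟨v, by omega⟩ + m ⟨v + 1, hv⟩ ≤ pos ⟨v + 1, hv1⟩ := hchain ⟨v, by omega⟩ hv1
        show i + m 0 + pos ⟨v, _⟩ + m ⟨v + 1, hv⟩ ≤ i + m 0 + pos ⟨v + 1, _⟩
        omega
    · cases j using Fin.cases with
      | zero => exact hocc₀
      | succ j => exact (occursAt_dropWord _ _ ht _).1 (hocc j)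

theorem containsMulti_succ_iff_endsWithFirstOcc {m r : Fin (s + 1) → ℕ}
    (τ : ∀ j : Fin (s + 1), Fin (m j) → Fin (r j)) (σ : Fin n → Fin k) :
    ContainsMulti τ σ ↔ ∃ t : Fin (n + 1), EndsWithFirstOcc (τ 0) (Fin.take t t.is_le σ) ∧
      ContainsMulti (fun j : Fin s => τ j.succ) (dropWord t σ) := by
  rw [containsMulti_succ_iff]
  constructor
  · rintro ⟨i, hocc, hrest⟩
    obtain ⟨i₀, hi₀, hfirst⟩ := exists_isFirstOccAt_le hocc
    have ht : i + m 0 ≤ n := hocc.1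
    refine ⟨⟨i₀ + m 0, by omega⟩, ?_, hrest.dropWord_of_le (by simp only; omega) ht⟩
    rw [endsWithFirstOcc_take_iff]
    simpa using hfirst
  · rintro ⟨t, hend, hrest⟩
    obtain ⟨hmt, hfirst⟩ := (endsWithFirstOcc_take_iff _ _ _).1 hend
    exact ⟨t - m 0, hfirst.1, by rwa [Nat.sub_add_cancel hmt]⟩

end MultiPatterns

noncomputable def firstOccSeries {m l : ℕ} (p : Fin m → Fin l) (k : ℕ) : PowerSeries ℕ :=
  mk fun t => #{w : Fin t → Fin k | EndsWithFirstOcc p w}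

theorem card_containsMulti_eq_coeff (k : ℕ) {s : ℕ} {m r : Fin s → ℕ}
    (τ : ∀ j : Fin s, Fin (m j) → Fin (r j)) (n : ℕ) :
    #{σ : Fin n → Fin k | ContainsMulti τ σ} =
      coeff n ((∏ j, firstOccSeries (τ j) k) * mk fun u => k ^ u) := by
  induction s generalizing n with
  | zero =>
    rw [filter_true_of_mem fun σ _ => containsMulti_fin_zero τ σ]
    simp
  | succ s ih =>
    have hunique : ∀ (σ : Fin n → Fin k) (t t' : Fin (n + 1)),
        EndsWithFirstOcc (τ 0) (Fin.take t t.is_le σ) →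
          EndsWithFirstOcc (τ 0) (Fin.take t' t'.is_le σ) → t = t' := by
      intro σ t t' h h'
      rw [endsWithFirstOcc_take_iff] at h h'
      have := h.2.unique h'.2
      omega
    simp_rw [containsMulti_succ_iff_endsWithFirstOcc τ]
    rw [card_filter_exists_take_and_dropWord _ (fun _ v => ContainsMulti _ v) hunique,
      Fin.prod_univ_succ, mul_assoc, coeff_mul, Nat.sum_antidiagonal_eq_sum_range_succ_mk,
      ← Fin.sum_univ_eq_sum_range]
    simp only [firstOccSeries, coeff_mk, ih]

theorem stmt11_general (s : ℕ) (m r : Fin (s + 1) → ℕ)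
    (τ : ∀ j : Fin (s + 1), Fin (m j) → Fin (r j)) (e : Equiv.Perm (Fin (s + 1)))
    (n k : ℕ) :
    Nat.card {σ : Fin n → Fin k // ¬ ContainsMulti τ σ} =
      Nat.card {σ : Fin n → Fin k // ¬ ContainsMulti (fun j => τ (e j)) σ} := by
  rw [Nat.card_eq_fintype_card, Nat.card_eq_fintype_card, Fintype.card_subtype_compl,
    Fintype.card_subtype_compl, Fintype.card_subtype, Fintype.card_subtype,
    card_containsMulti_eq_coeff, card_containsMulti_eq_coeff,
    Equiv.prod_comp e fun j => firstOccSeries (τ j) k]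

theorem stmt11 (s : ℕ) (m r : Fin (s + 1) → ℕ)
    (τ : ∀ j : Fin (s + 1), Fin (m j) → Fin (r j)) (e : Equiv.Perm (Fin (s + 1)))
    (n k : ℕ) (hk : 1 ≤ k) :
    Nat.card {σ : Fin n → Fin k // ¬ ContainsMulti τ σ} =
      Nat.card {σ : Fin n → Fin k // ¬ ContainsMulti (fun j => τ (e j)) σ} :=
  stmt11_general s m r τ e n k
end

section
/- Let τ = τ⁰-τ¹-⋯-τˢ be a multi-pattern and for each 0 ≤ i ≤ s let f_i be a trivial bijection (one of: identity, reverse, complement, or reverse composed with complement). Then for every n ≥ 0 and k ≥ 1, the number of k-ary words of length n avoiding τ equals the number of k-ary words of length n avoiding the multi-pattern f₀(τ⁰)-f₁(τ¹)-⋯-f_s(τˢ). -/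
/-- The reverse of a pattern: `R(p)(a) = p(m - 1 - a)`. -/
def PatRev {m l : ℕ} (p : Fin m → Fin l) : Fin m → Fin l := fun a => p a.rev

/-- The complement of a pattern: `C(p)(a) = l - 1 - p(a)`. -/
def PatCompl {m l : ℕ} (p : Fin m → Fin l) : Fin m → Fin l := fun a => (p a).rev

/-- A trivial bijection on patterns is one of: identity, reverse, complement,
or reverse composed with complement. -/
def IsTrivialBij {m l : ℕ} (f : (Fin m → Fin l) → (Fin m → Fin l)) : Prop :=
  f = id ∨ f = PatRev ∨ f = PatCompl ∨ f = fun p => PatRev (PatCompl p)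

/-!
Cut a word at the end `e` of the earliest-ending occurrence of the first block `τ⁰`. The word
contains `τ⁰-τ¹-⋯-τˢ` iff `τ⁰` occurs in it and the part after position `e` contains
`τ¹-⋯-τˢ`, while the part before is any word whose earliest `τ⁰`-occurrence ends at its last
letter. Hence the number of words avoiding the multi-pattern is computed recursively from the
numbers `A(n)` of words avoiding each block and `B(e)` of words whose earliest occurrence of that
block ends at the last letter. As `A(0) + B(0) = 1` and `A(e + 1) + B(e + 1) = k A(e)`, `B` is
determined by `A`, so each block may be replaced by one with the same `A`. Reversing or
complementing whole words shows that a trivial bijection does not change `A`.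
-/

open Finset

namespace WordPattern

section Words

variable {α : Type*} {n : ℕ}

def suffix (σ : Fin n → α) (e : ℕ) : Fin (n - e) → α := fun b => σ ⟨e + b, by omega⟩

theorem card_take_suffix {e : ℕ} (h : e ≤ n) (P : (Fin e → α) → Prop)
    (Q : (Fin (n - e) → α) → Prop) :
    Nat.card {σ : Fin n → α // P (Fin.take e h σ) ∧ Q (suffix σ e)} =
      Nat.card {u // P u} * Nat.card {v // Q v} := by
  let split : (Fin n → α) ≃ (Fin e → α) × (Fin (n - e) → α) :=
    ((finCongr (by omega : n = e + (n - e))).arrowCongr (Equiv.refl _)).trans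
      (Fin.appendEquiv e (n - e)).symm
  rw [← Nat.card_prod, ← Nat.card_congr Equiv.subtypeProdEquivProd]
  exact Nat.card_congr (split.subtypeEquiv fun _ => Iff.rfl)

end Words

theorem card_exists_eq_sum_range {α : Type*} [Finite α] {N : ℕ} (P : ℕ → α → Prop)
    (hlt : ∀ e a, P e a → e < N) (huniq : ∀ e e' a, P e a → P e' a → e = e') :
    Nat.card {a // ∃ e, P e a} = ∑ e ∈ range N, Nat.card {a // P e a} := by
  classical
  have := Fintype.ofFinite α
  simp only [Nat.card_eq_fintype_card, Fintype.card_subtype]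
  rw [← card_biUnion]
  · congr 1
    ext a
    simp only [mem_filter, mem_univ, true_and, mem_biUnion, mem_range]
    exact ⟨fun ⟨e, he⟩ => ⟨e, hlt e a he, he⟩, fun ⟨e, _, he⟩ => ⟨e, he⟩⟩
  · intro e _ e' _ hne
    simp only [Function.onFun, disjoint_filter]
    exact fun a _ he he' => hne (huniq e e' a he he')

theorem isLeast_inter_Iic_iff {α : Type*} [LinearOrder α] {S : Set α} {e : α} :
    IsLeast (S ∩ Set.Iic e) e ↔ IsLeast S e :=
  ⟨fun h => ⟨h.1.1, fun x hx => (le_total x e).elim (fun hxe => h.2 ⟨hx, hxe⟩) id⟩,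
    fun h => ⟨⟨h.1, Set.self_mem_Iic⟩, fun _ hx => h.2 hx.1⟩⟩

section Occurrences

variable {m l n n' k : ℕ}

def occurrenceEnds (p : Fin m → Fin l) (σ : Fin n → Fin k) : Set ℕ :=
  {e | ∃ i, OccursAt p σ i ∧ i + m = e}

theorem occursAt_iff_of_factor {p : Fin m → Fin l} {σ : Fin n → Fin k} {σ' : Fin n' → Fin k}
    {d : ℕ} (hd : d + n' ≤ n) (hσ : ∀ b : Fin n', σ' b = σ ⟨d + b, by omega⟩) (i : ℕ) :
    OccursAt p σ' i ↔ OccursAt p σ (d + i) ∧ i + m ≤ n' := by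
  have shift : ∀ (a : Fin m) (h : i + m ≤ n'),
      σ' ⟨i + a, by omega⟩ = σ ⟨d + i + a, by omega⟩ := fun a h => by
    rw [hσ]
    exact congrArg σ (Fin.ext (Nat.add_assoc d i a).symm)
  constructor
  · rintro ⟨h, hocc⟩
    refine ⟨⟨by omega, fun a b => ?_⟩, h⟩
    rw [← shift a h, ← shift b h]
    exact hocc a b
  · rintro ⟨⟨_, hocc⟩, h⟩
    refine ⟨h, fun a b => ?_⟩
    rw [shift a h, shift b h]
    exact hocc a b

theorem occursAt_take_iff {p : Fin m → Fin l} {σ : Fin n → Fin k} {e : ℕ} (h : e ≤ n) (i : ℕ) :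
    OccursAt p (Fin.take e h σ) i ↔ OccursAt p σ i ∧ i + m ≤ e := by
  simpa only [zero_add] using occursAt_iff_of_factor (σ' := Fin.take e h σ) (d := 0) (by omega)
    (fun b => congrArg σ (Fin.ext (zero_add _).symm)) i

theorem occursAt_suffix_iff {p : Fin m → Fin l} {σ : Fin n → Fin k} {e : ℕ} (he : e ≤ n)
    (i : ℕ) : OccursAt p (suffix σ e) i ↔ OccursAt p σ (e + i) := by
  rw [occursAt_iff_of_factor (σ' := suffix σ e) (d := e) (by omega) fun _ => rfl]
  exact ⟨And.left, fun h => ⟨h, by obtain ⟨h, -⟩ := h; omega⟩⟩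

theorem occurrenceEnds_subset_Iic (p : Fin m → Fin l) (σ : Fin n → Fin k) :
    occurrenceEnds p σ ⊆ Set.Iic n := by
  rintro _ ⟨i, ⟨h, -⟩, rfl⟩
  exact h

theorem occurrenceEnds_take (p : Fin m → Fin l) (σ : Fin n → Fin k) {e : ℕ} (h : e ≤ n) :
    occurrenceEnds p (Fin.take e h σ) = occurrenceEnds p σ ∩ Set.Iic e := by
  ext e'
  simp only [occurrenceEnds, occursAt_take_iff, Set.mem_inter_iff, Set.mem_ofPred_eq,
    Set.mem_Iic]
  constructor
  · rintro ⟨i, ⟨hi, hle⟩, rfl⟩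
    exact ⟨⟨i, hi, rfl⟩, hle⟩
  · rintro ⟨⟨i, hi, rfl⟩, hle⟩
    exact ⟨i, ⟨hi, hle⟩, rfl⟩

theorem avoidsPat_iff_occurrenceEnds_eq_empty {p : Fin m → Fin l} {σ : Fin n → Fin k} :
    AvoidsPat p σ ↔ occurrenceEnds p σ = ∅ := by
  simp [AvoidsPat, occurrenceEnds, Set.eq_empty_iff_forall_notMem]

theorem not_isLeast_occurrenceEnds_of_avoidsPat {p : Fin m → Fin l} {σ : Fin n → Fin k}
    (h : AvoidsPat p σ) (e : ℕ) : ¬ IsLeast (occurrenceEnds p σ) e := fun hleast =>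
  Set.nonempty_iff_ne_empty.1 ⟨e, hleast.1⟩ (avoidsPat_iff_occurrenceEnds_eq_empty.1 h)

theorem avoidsPat_or_isLeast_occurrenceEnds_zero (p : Fin m → Fin l) (w : Fin 0 → Fin k) :
    AvoidsPat p w ∨ IsLeast (occurrenceEnds p w) 0 := by
  rw [avoidsPat_iff_occurrenceEnds_eq_empty]
  refine (occurrenceEnds p w).eq_empty_or_nonempty.imp id fun ⟨e, he⟩ => ?_
  obtain rfl : e = 0 := Nat.le_zero.1 (occurrenceEnds_subset_Iic p w he)
  exact ⟨he, fun _ _ => Nat.zero_le _⟩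

theorem avoidsPat_take_iff (p : Fin m → Fin l) {e : ℕ} (w : Fin (e + 1) → Fin k) :
    AvoidsPat p (Fin.take e e.le_succ w) ↔
      AvoidsPat p w ∨ IsLeast (occurrenceEnds p w) (e + 1) := by
  have hsub := occurrenceEnds_subset_Iic p w
  simp only [avoidsPat_iff_occurrenceEnds_eq_empty, occurrenceEnds_take,
    Set.eq_empty_iff_forall_notMem, Set.mem_inter_iff, Set.mem_Iic, not_and, not_le]
  constructor
  · intro h
    refine or_iff_not_imp_left.2 fun hne => ?_
    obtain ⟨e', he'⟩ := not_forall_not.1 hne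
    obtain rfl : e' = e + 1 := le_antisymm (hsub he') (h e' he')
    exact ⟨he', fun x hx => h x hx⟩
  · rintro (hempty | hleast) x hx
    · exact absurd hx (hempty x)
    · exact hleast.2 hx

end Occurrences

section MultiPatterns

variable {s n n' k : ℕ}

theorem add_le_of_chain {len pos : Fin s → ℕ}
    (hchain : ∀ (j : Fin s) (h : (j : ℕ) + 1 < s), pos j + len j ≤ pos ⟨j + 1, h⟩)
    {j j' : Fin s} (hjj' : j < j') : pos j + len j ≤ pos j' := by
  obtain ⟨t, ht⟩ := j'
  induction t with
  | zero => exact absurd hjj' (Nat.not_lt_zero _)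
  | succ t ih =>
    have hstep : pos ⟨t, _⟩ + len ⟨t, _⟩ ≤ pos ⟨t + 1, ht⟩ := hchain ⟨t, by omega⟩ ht
    rcases (Nat.lt_succ_iff.1 hjj').lt_or_eq with hlt | hjt
    · have := ih (by omega) hlt
      omega
    · rw [show j = ⟨t, _⟩ from Fin.ext hjt]
      exact hstep

theorem containsMulti_of_factor {m r : Fin s → ℕ} {τ : ∀ j, Fin (m j) → Fin (r j)}
    {σ : Fin n → Fin k} {σ' : Fin n' → Fin k} {d : ℕ} (hd : d + n' ≤ n)
    (hσ : ∀ b : Fin n', σ' b = σ ⟨d + b, by omega⟩) (h : ContainsMulti τ σ') :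
    ContainsMulti τ σ := by
  obtain ⟨pos, hchain, hocc⟩ := h
  refine ⟨fun j => d + pos j, fun j hj => ?_,
    fun j => ((occursAt_iff_of_factor hd hσ _).1 (hocc j)).1⟩
  have := hchain j hj
  dsimp only
  omega

theorem containsMulti_suffix_of_le {m r : Fin s → ℕ} {τ : ∀ j, Fin (m j) → Fin (r j)}
    {σ : Fin n → Fin k} {e e' : ℕ} (hee' : e ≤ e') (he' : e' ≤ n)
    (h : ContainsMulti τ (suffix σ e')) : ContainsMulti τ (suffix σ e) :=
  containsMulti_of_factor (d := e' - e) (by omega)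
    (fun b => congrArg σ (Fin.ext (by simp only; omega))) h

theorem containsMulti_succ_iff {m r : Fin (s + 1) → ℕ} (τ : ∀ j, Fin (m j) → Fin (r j))
    (σ : Fin n → Fin k) :
    ContainsMulti τ σ ↔
      ∃ i, OccursAt (τ 0) σ i ∧ ContainsMulti (Fin.tail τ) (suffix σ (i + m 0)) := by
  constructor
  · rintro ⟨pos, hchain, hocc⟩
    have hle : ∀ j : Fin s, pos 0 + m 0 ≤ pos j.succ := fun j => add_le_of_chain hchain j.succ_pos
    have hend : pos 0 + m 0 ≤ n := (hocc 0).1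
    refine ⟨pos 0, hocc 0, fun j => pos j.succ - (pos 0 + m 0), fun j hj => ?_, fun j => ?_⟩
    · have : pos j.succ + m j.succ ≤ pos (Fin.succ ⟨j + 1, hj⟩) :=
        hchain j.succ (by simp only [Fin.val_succ]; omega)
      have := hle j
      have := hle ⟨j + 1, hj⟩
      dsimp only
      omega
    · rw [Fin.tail, occursAt_suffix_iff hend, Nat.add_sub_cancel' (hle j)]
      exact hocc j.succ
  · rintro ⟨i, hocc₀, pos, hchain, hocc⟩
    have hend : i + m 0 ≤ n := hocc₀.1
    refine ⟨Fin.cons i fun j => i + m 0 + pos j, fun j hj => ?_, fun j => ?_⟩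
    · cases j using Fin.cases with
      | zero => exact Nat.le_add_right _ _
      | succ j =>
        have hj' : (j : ℕ) + 1 < s := by simp only [Fin.val_succ] at hj; omega
        have : pos j + m j.succ ≤ pos ⟨j + 1, hj'⟩ := hchain j hj'
        show i + m 0 + pos j + m j.succ ≤ i + m 0 + pos ⟨j + 1, hj'⟩
        omega
    · cases j using Fin.cases with
      | zero => exact hocc₀
      | succ j => exact (occursAt_suffix_iff hend _).1 (hocc j)

theorem not_containsMulti_succ_iff {m r : Fin (s + 1) → ℕ} (τ : ∀ j, Fin (m j) → Fin (r j))
    (σ : Fin n → Fin k) :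
    ¬ ContainsMulti τ σ ↔ AvoidsPat (τ 0) σ ∨
      ∃ e, IsLeast (occurrenceEnds (τ 0) σ) e ∧ ¬ ContainsMulti (Fin.tail τ) (suffix σ e) := by
  have hends : ContainsMulti τ σ ↔
      ∃ e ∈ occurrenceEnds (τ 0) σ, ContainsMulti (Fin.tail τ) (suffix σ e) := by
    rw [containsMulti_succ_iff]
    constructor
    · rintro ⟨i, hi, h⟩
      exact ⟨_, ⟨i, hi, rfl⟩, h⟩
    · rintro ⟨_, ⟨i, hi, rfl⟩, h⟩
      exact ⟨i, hi, h⟩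
  rw [hends, avoidsPat_iff_occurrenceEnds_eq_empty]
  rcases (occurrenceEnds (τ 0) σ).eq_empty_or_nonempty with hS | hS
  · simp [hS]
  · have hleast := isLeast_csInf hS
    simp only [hS.ne_empty, false_or]
    constructor
    · intro h
      exact ⟨_, hleast, fun hc => h ⟨_, hleast.1, hc⟩⟩
    · rintro ⟨e, he, hne⟩ ⟨e', he', hc⟩
      exact hne (containsMulti_suffix_of_le (he.2 he') (occurrenceEnds_subset_Iic _ _ he') hc)

end MultiPatterns

section Counting

variable {m l k : ℕ}

noncomputable def avoidCount (k : ℕ) (p : Fin m → Fin l) (n : ℕ) : ℕ :=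
  Nat.card {σ : Fin n → Fin k // AvoidsPat p σ}

noncomputable def firstEndCount (k : ℕ) (p : Fin m → Fin l) (e : ℕ) : ℕ :=
  Nat.card {w : Fin e → Fin k // IsLeast (occurrenceEnds p w) e}

noncomputable def multiAvoidCount {s : ℕ} {m r : Fin s → ℕ} (k : ℕ)
    (τ : ∀ j, Fin (m j) → Fin (r j)) (n : ℕ) : ℕ :=
  Nat.card {σ : Fin n → Fin k // ¬ ContainsMulti τ σ}

theorem avoidCount_add_firstEndCount (p : Fin m → Fin l) (e : ℕ) :
    avoidCount k p e + firstEndCount k p e =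
      Nat.card {w : Fin e → Fin k // AvoidsPat p w ∨ IsLeast (occurrenceEnds p w) e} := by
  classical
  refine (Nat.card_sum ..).symm.trans (Nat.card_congr (subtypeOrEquiv _ _ ?_).symm)
  exact Pi.disjoint_iff.2 fun w => Prop.disjoint_iff.2 fun ⟨havoid, hleast⟩ =>
    not_isLeast_occurrenceEnds_of_avoidsPat havoid e hleast

theorem avoidCount_add_firstEndCount_zero (p : Fin m → Fin l) :
    avoidCount k p 0 + firstEndCount k p 0 = 1 := by
  rw [avoidCount_add_firstEndCount,
    Nat.card_congr (Equiv.subtypeUnivEquiv (avoidsPat_or_isLeast_occurrenceEnds_zero p))]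
  simp

theorem avoidCount_add_firstEndCount_succ (p : Fin m → Fin l) (e : ℕ) :
    avoidCount k p (e + 1) + firstEndCount k p (e + 1) = avoidCount k p e * k := by
  calc avoidCount k p (e + 1) + firstEndCount k p (e + 1)
      = Nat.card {w : Fin (e + 1) → Fin k // AvoidsPat p (Fin.take e e.le_succ w) ∧ True} := by
        rw [avoidCount_add_firstEndCount]
        exact Nat.card_congr (Equiv.subtypeEquivRight fun w =>
          (avoidsPat_take_iff p w).symm.trans (iff_of_eq (and_true _)).symm)
    _ = avoidCount k p e * Nat.card {v : Fin (e + 1 - e) → Fin k // True} :=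
        card_take_suffix e.le_succ (AvoidsPat p) fun _ => True
    _ = avoidCount k p e * k := by simp

theorem firstEndCount_eq_of_avoidCount_eq {m' l' : ℕ} {p : Fin m → Fin l} {q : Fin m' → Fin l'}
    (h : ∀ t, avoidCount k p t = avoidCount k q t) (e : ℕ) :
    firstEndCount k p e = firstEndCount k q e := by
  cases e with
  | zero =>
    have hp := avoidCount_add_firstEndCount_zero (k := k) p
    have hq := avoidCount_add_firstEndCount_zero (k := k) q
    rw [h] at hp
    omega
  | succ e =>
    have hp := avoidCount_add_firstEndCount_succ (k := k) p e
    have hq := avoidCount_add_firstEndCount_succ (k := k) q e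
    rw [h, h] at hp
    omega

theorem multiAvoidCount_succ {s : ℕ} {m r : Fin (s + 1) → ℕ} (τ : ∀ j, Fin (m j) → Fin (r j))
    (n : ℕ) :
    multiAvoidCount k τ n = avoidCount k (τ 0) n +
      ∑ e ∈ range (n + 1), firstEndCount k (τ 0) e * multiAvoidCount k (Fin.tail τ) (n - e) := by
  classical
  rw [multiAvoidCount, Nat.card_congr (Equiv.subtypeEquivRight (not_containsMulti_succ_iff τ)),
    Nat.card_congr (subtypeOrEquiv _ _ ?disjoint), Nat.card_sum,
    card_exists_eq_sum_range _ ?bound ?unique]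
  case disjoint =>
    exact Pi.disjoint_iff.2 fun σ => Prop.disjoint_iff.2 fun ⟨havoid, e, hleast, _⟩ =>
      not_isLeast_occurrenceEnds_of_avoidsPat havoid e hleast
  case bound =>
    exact fun e σ ⟨hleast, _⟩ => Nat.lt_succ_of_le (occurrenceEnds_subset_Iic _ σ hleast.1)
  case unique =>
    exact fun e e' σ h h' => h.1.unique h'.1
  refine congrArg _ (sum_congr rfl fun e he => ?_)
  have he : e ≤ n := Nat.lt_succ_iff.1 (mem_range.1 he)
  rw [firstEndCount, multiAvoidCount, ← card_take_suffix he]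
  exact Nat.card_congr (Equiv.subtypeEquivRight fun σ => by
    rw [occurrenceEnds_take, isLeast_inter_Iic_iff])

theorem multiAvoidCount_congr {s : ℕ} {m r m' r' : Fin s → ℕ} {τ : ∀ j, Fin (m j) → Fin (r j)}
    {τ' : ∀ j, Fin (m' j) → Fin (r' j)} (h : ∀ j t, avoidCount k (τ j) t = avoidCount k (τ' j) t)
    (n : ℕ) : multiAvoidCount k τ n = multiAvoidCount k τ' n := by
  induction s generalizing n with
  | zero =>
    have hall : ∀ {m r : Fin 0 → ℕ} (τ : ∀ j, Fin (m j) → Fin (r j)) (σ : Fin n → Fin k),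
        ContainsMulti τ σ := fun _ _ => ⟨Fin.elim0, fun j => j.elim0, fun j => j.elim0⟩
    simp [multiAvoidCount, hall]
  | succ s ih =>
    rw [multiAvoidCount_succ, multiAvoidCount_succ, h 0 n]
    refine congrArg _ (sum_congr rfl fun e _ => ?_)
    rw [firstEndCount_eq_of_avoidCount_eq (h 0),
      ih (τ := Fin.tail τ) (τ' := Fin.tail τ') fun j => h j.succ]

end Counting

section Symmetries

variable {m l n k : ℕ}

theorem patRev_involutive : Function.Involutive (PatRev : (Fin m → Fin l) → Fin m → Fin l) :=
  fun p => funext fun a => congrArg p a.rev_rev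

theorem patCompl_involutive :
    Function.Involutive (PatCompl : (Fin m → Fin l) → Fin m → Fin l) :=
  fun p => funext fun a => (p a).rev_rev

theorem occursAt_patCompl_iff {p : Fin m → Fin l} {σ : Fin n → Fin k} {i : ℕ} :
    OccursAt (PatCompl p) σ i ↔ OccursAt p (PatCompl σ) i := by
  constructor <;>
  · rintro ⟨h, hc⟩
    exact ⟨h, fun a b => by simpa [PatCompl, Fin.rev_lt_rev] using hc b a⟩

theorem occursAt_patRev {p : Fin m → Fin l} {σ : Fin n → Fin k} {i : ℕ} (h : OccursAt p σ i) :
    OccursAt (PatRev p) (PatRev σ) (n - m - i) := by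
  obtain ⟨hb, hc⟩ := h
  refine ⟨by omega, fun a b => ?_⟩
  have hrev : ∀ c : Fin m, PatRev σ ⟨n - m - i + c, by omega⟩ = σ ⟨i + c.rev, by omega⟩ :=
    fun c => congrArg σ (Fin.ext (by simp only [Fin.val_rev]; omega))
  rw [hrev a, hrev b]
  exact hc a.rev b.rev

theorem avoidsPat_patRev_iff {p : Fin m → Fin l} {σ : Fin n → Fin k} :
    AvoidsPat (PatRev p) σ ↔ AvoidsPat p (PatRev σ) := by
  constructor
  · intro h i hocc
    exact h _ (patRev_involutive σ ▸ occursAt_patRev hocc)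
  · intro h i hocc
    exact h _ (patRev_involutive p ▸ occursAt_patRev hocc)

theorem avoidCount_patRev (p : Fin m → Fin l) (n : ℕ) :
    avoidCount k (PatRev p) n = avoidCount k p n :=
  Nat.card_congr (patRev_involutive.toPerm _ |>.subtypeEquiv fun _ => avoidsPat_patRev_iff)

theorem avoidCount_patCompl (p : Fin m → Fin l) (n : ℕ) :
    avoidCount k (PatCompl p) n = avoidCount k p n :=
  Nat.card_congr (patCompl_involutive.toPerm _ |>.subtypeEquiv fun _ =>
    forall_congr' fun _ => not_congr occursAt_patCompl_iff)

theorem avoidCount_eq_of_isTrivialBij {f : (Fin m → Fin l) → Fin m → Fin l}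
    (hf : IsTrivialBij f) (p : Fin m → Fin l) (n : ℕ) :
    avoidCount k (f p) n = avoidCount k p n := by
  rcases hf with rfl | rfl | rfl | rfl
  · rfl
  · exact avoidCount_patRev p n
  · exact avoidCount_patCompl p n
  · rw [avoidCount_patRev, avoidCount_patCompl]

end Symmetries

end WordPattern

theorem stmt12_general (s : ℕ) (m r : Fin (s + 1) → ℕ)
    (τ : ∀ j : Fin (s + 1), Fin (m j) → Fin (r j))
    (f : ∀ j : Fin (s + 1), (Fin (m j) → Fin (r j)) → (Fin (m j) → Fin (r j)))
    (hf : ∀ j, IsTrivialBij (f j))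
    (n k : ℕ) :
    Nat.card {σ : Fin n → Fin k // ¬ ContainsMulti τ σ} =
      Nat.card {σ : Fin n → Fin k // ¬ ContainsMulti (fun j => f j (τ j)) σ} :=
  WordPattern.multiAvoidCount_congr
    (fun j t => (WordPattern.avoidCount_eq_of_isTrivialBij (hf j) (τ j) t).symm) n

theorem stmt12 (s : ℕ) (m r : Fin (s + 1) → ℕ)
    (τ : ∀ j : Fin (s + 1), Fin (m j) → Fin (r j))
    (f : ∀ j : Fin (s + 1), (Fin (m j) → Fin (r j)) → (Fin (m j) → Fin (r j)))
    (hf : ∀ j, IsTrivialBij (f j))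
    (n k : ℕ) (hk : 1 ≤ k) :
    Nat.card {σ : Fin n → Fin k // ¬ ContainsMulti τ σ} =
      Nat.card {σ : Fin n → Fin k // ¬ ContainsMulti (fun j => f j (τ j)) σ} :=
  stmt12_general s m r τ f hf n k
end

section
/- Let τ = τ⁰-τ¹-⋯-τˢ be a multi-pattern (s ≥ 1) with τ⁰ nonempty, and let φ denote the multi-pattern τ¹-⋯-τˢ. Then for all k ≥ 1, in ℚ[[x]]: A_τ(x;k) = A_{τ⁰}(x;k) + A_φ(x;k)·A*_{τ⁰}(x;k), where A*_{τ⁰}(x;k) = Σ_{n≥0} (number of k-ary words of length n quasi-avoiding τ⁰)·xⁿ. -/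
/-- `σ` quasi-avoids `p`: it has exactly one occurrence of `p`, occupying the last `m`
positions, i.e. at position `n - m`. -/
def QuasiAvoids {m l n k : ℕ} (p : Fin m → Fin l) (σ : Fin n → Fin k) : Prop :=
  OccursAt p σ (n - m) ∧ ∀ i : ℕ, OccursAt p σ i → i = n - m

/-- Generating function for the number of `k`-ary words avoiding the subword pattern `p`. -/
noncomputable def Apat {m l : ℕ} (p : Fin m → Fin l) (k : ℕ) : PowerSeries ℚ :=
  PowerSeries.mk fun n => (Nat.card {σ : Fin n → Fin k // AvoidsPat p σ} : ℚ)

/-- Generating function for the number of `k`-ary words quasi-avoiding `p`. -/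
noncomputable def ApatStar {m l : ℕ} (p : Fin m → Fin l) (k : ℕ) : PowerSeries ℚ :=
  PowerSeries.mk fun n => (Nat.card {σ : Fin n → Fin k // QuasiAvoids p σ} : ℚ)

/-- Generating function for the number of `k`-ary words avoiding a multi-pattern. -/
noncomputable def Amulti {s : ℕ} {m r : Fin s → ℕ} (τ : ∀ j : Fin s, Fin (m j) → Fin (r j))
    (k : ℕ) : PowerSeries ℚ :=
  PowerSeries.mk fun n => (Nat.card {σ : Fin n → Fin k // ¬ ContainsMulti τ σ} : ℚ)

namespace S13

variable {k : ℕ}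

def take {n : ℕ} (σ : Fin n → Fin k) (t : ℕ) (h : t ≤ n) : Fin t → Fin k :=
  fun i => σ ⟨i, lt_of_lt_of_le i.isLt h⟩

def drop {n : ℕ} (σ : Fin n → Fin k) (t : ℕ) (h : t ≤ n) : Fin (n - t) → Fin k :=
  fun i => σ ⟨t + i, by have := i.isLt; omega⟩

def glue {n : ℕ} (t : ℕ) (h : t ≤ n) (α : Fin t → Fin k) (β : Fin (n - t) → Fin k) :
    Fin n → Fin k :=
  fun i => if h' : (i : ℕ) < t then α ⟨i, h'⟩ else β ⟨(i : ℕ) - t, by have := i.isLt; omega⟩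

lemma occ_congr {mp lp n n' : ℕ} (p : Fin mp → Fin lp) (σ : Fin n → Fin k)
    (σ' : Fin n' → Fin k) (i i' : ℕ) (hb : i + mp ≤ n ↔ i' + mp ≤ n')
    (hv : ∀ (a : Fin mp) (h : i + mp ≤ n) (h' : i' + mp ≤ n'),
      σ ⟨i + a, lt_of_lt_of_le (Nat.add_lt_add_left a.isLt i) h⟩ =
      σ' ⟨i' + a, lt_of_lt_of_le (Nat.add_lt_add_left a.isLt i') h'⟩) :
    OccursAt p σ i ↔ OccursAt p σ' i' := by
  constructor
  · rintro ⟨h, hocc⟩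
    refine ⟨hb.mp h, fun a b => ?_⟩
    rw [← hv a h (hb.mp h), ← hv b h (hb.mp h)]
    exact hocc a b
  · rintro ⟨h', hocc⟩
    refine ⟨hb.mpr h', fun a b => ?_⟩
    rw [hv a (hb.mpr h') h', hv b (hb.mpr h') h']
    exact hocc a b

lemma occ_take_iff {mp lp n : ℕ} (p : Fin mp → Fin lp) (σ : Fin n → Fin k) {t : ℕ}
    (h : t ≤ n) (i : ℕ) :
    OccursAt p (take σ t h) i ↔ i + mp ≤ t ∧ OccursAt p σ i := by
  have key : i + mp ≤ t → (OccursAt p (take σ t h) i ↔ OccursAt p σ i) := by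
    intro hit
    exact occ_congr p (take σ t h) σ i i ⟨fun _ => hit.trans h, fun _ => hit⟩
      (fun a h1 h2 => rfl)
  constructor
  · rintro ⟨hb, hocc⟩
    exact ⟨hb, (key hb).mp ⟨hb, hocc⟩⟩
  · rintro ⟨hit, h2⟩
    exact (key hit).mpr h2

lemma occ_drop_iff {mp lp n : ℕ} (p : Fin mp → Fin lp) (σ : Fin n → Fin k) {t : ℕ}
    (h : t ≤ n) (i : ℕ) :
    OccursAt p (drop σ t h) i ↔ OccursAt p σ (t + i) := by
  refine occ_congr p (drop σ t h) σ i (t + i) (by omega) (fun a h1 h2 => ?_)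
  show σ _ = σ _
  exact congrArg σ (Fin.ext (by simp [Nat.add_assoc]))

lemma occ_glue_left {mp lp n : ℕ} (p : Fin mp → Fin lp) {t : ℕ} (h : t ≤ n)
    (α : Fin t → Fin k) (β : Fin (n - t) → Fin k) {i : ℕ} (hit : i + mp ≤ t) :
    OccursAt p (glue t h α β) i ↔ OccursAt p α i := by
  refine occ_congr p (glue t h α β) α i i ⟨fun _ => hit, fun _ => hit.trans h⟩
    (fun a h1 h2 => ?_)
  have ha : i + (a : ℕ) < t := by have := a.isLt; omega
  show dite _ _ _ = _
  rw [dif_pos ha]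

lemma occ_glue_right {mp lp n : ℕ} (p : Fin mp → Fin lp) {t : ℕ} (h : t ≤ n)
    (α : Fin t → Fin k) (β : Fin (n - t) → Fin k) {i : ℕ} (hti : t ≤ i) :
    OccursAt p (glue t h α β) i ↔ OccursAt p β (i - t) := by
  refine occ_congr p (glue t h α β) β i (i - t) (by omega) (fun a h1 h2 => ?_)
  have ha : ¬ (i + (a : ℕ) < t) := by omega
  show dite _ _ _ = _
  rw [dif_neg ha]
  refine congrArg β (Fin.ext ?_)
  show i + (a : ℕ) - t = i - t + (a : ℕ)
  omega

lemma glue_take_drop {n : ℕ} (σ : Fin n → Fin k) (t : ℕ) (h : t ≤ n) :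
    glue t h (take σ t h) (drop σ t h) = σ := by
  funext i
  unfold glue take drop
  by_cases hi : (i : ℕ) < t
  · rw [dif_pos hi]
  · rw [dif_neg hi]
    refine congrArg σ (Fin.ext ?_)
    show t + ((i : ℕ) - t) = (i : ℕ)
    omega

lemma take_glue {n : ℕ} (t : ℕ) (h : t ≤ n) (α : Fin t → Fin k) (β : Fin (n - t) → Fin k) :
    take (glue t h α β) t h = α := by
  funext i
  unfold glue take
  beta_reduce
  rw [dif_pos (show ((⟨(i : ℕ), lt_of_lt_of_le i.isLt h⟩ : Fin n) : ℕ) < t from i.isLt)]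

lemma drop_glue {n : ℕ} (t : ℕ) (h : t ≤ n) (α : Fin t → Fin k) (β : Fin (n - t) → Fin k) :
    drop (glue t h α β) t h = β := by
  funext i
  unfold glue drop
  beta_reduce
  rw [dif_neg (show ¬ (t + (i : ℕ) < t) by omega)]
  exact congrArg β (Fin.ext (by simp))

lemma quasi_ge {mp lp t : ℕ} {p : Fin mp → Fin lp} {α : Fin t → Fin k}
    (hα : QuasiAvoids p α) : mp ≤ t := by
  obtain ⟨⟨hb, _⟩, _⟩ := hα
  omega

section Multi

variable {s : ℕ} {m r : Fin (s + 1) → ℕ} (τ : ∀ j : Fin (s + 1), Fin (m j) → Fin (r j))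

lemma not_contains_of_avoids {n : ℕ} {σ : Fin n → Fin k} (hA : AvoidsPat (τ 0) σ) :
    ¬ ContainsMulti τ σ := fun ⟨i, _, hocc⟩ => hA (i 0) (hocc 0)

lemma occ_glue_quasi {n t : ℕ} (h : t ≤ n) {α : Fin t → Fin k} {β : Fin (n - t) → Fin k}
    (hα : QuasiAvoids (τ 0) α) : OccursAt (τ 0) (glue t h α β) (t - m 0) := by
  have hmt := quasi_ge hα
  exact (occ_glue_left (τ 0) h α β (by omega)).mpr hα.1

lemma not_contains_glue (hs : 1 ≤ s) {n t : ℕ} (h : t ≤ n)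
    {α : Fin t → Fin k} {β : Fin (n - t) → Fin k}
    (hα : QuasiAvoids (τ 0) α)
    (hβ : ¬ ContainsMulti (fun j : Fin s => τ j.succ) β) :
    ¬ ContainsMulti τ (glue t h α β) := by
  have hmt : m 0 ≤ t := quasi_ge hα
  rintro ⟨i, hchain, hocc⟩
  have hz : (⟨0, by omega⟩ : Fin (s + 1)) = 0 := by ext; simp
  have h0 : OccursAt (τ 0) (glue t h α β) (i 0) := hocc 0
  have hge : t ≤ i 0 + m 0 := by
    rcases le_or_gt (i 0 + m 0) t with hle | hlt
    · have h1 := (occ_glue_left (τ 0) h α β hle).mp h0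
      have h2 := hα.2 _ h1
      omega
    · omega
  have key : ∀ v, ∀ _hv : v < s, t ≤ i ⟨v + 1, by omega⟩ := by
    intro v
    induction v with
    | zero =>
      intro hv
      have h1 : i ⟨0, by omega⟩ + m ⟨0, by omega⟩ ≤ i ⟨0 + 1, by omega⟩ :=
        hchain ⟨0, by omega⟩ (by show (0 : ℕ) + 1 < s + 1; omega)
      rw [hz] at h1
      omega
    | succ v ih =>
      intro hv
      have h1 : i ⟨v + 1, by omega⟩ + m ⟨v + 1, by omega⟩ ≤ i ⟨v + 1 + 1, by omega⟩ :=
        hchain ⟨v + 1, by omega⟩ (by show v + 1 + 1 < s + 1; omega)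
      have h2 := ih (by omega)
      omega
  apply hβ
  refine ⟨fun j => i j.succ - t, ?_, ?_⟩
  · intro j hj
    have h2 : t ≤ i j.succ := key (j : ℕ) j.isLt
    have h1 : i j.succ + m j.succ ≤ i ⟨(j : ℕ) + 1 + 1, by have := j.isLt; omega⟩ :=
      hchain j.succ (by have := j.isLt; show (j : ℕ) + 1 + 1 < s + 1; omega)
    show i j.succ - t + m j.succ ≤ i ⟨(j : ℕ) + 1 + 1, by have := j.isLt; omega⟩ - t
    omega
  · intro j
    have h2 : t ≤ i j.succ := key (j : ℕ) j.isLt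
    exact (occ_glue_right (τ j.succ) h α β h2).mp (hocc j.succ)

lemma contains_of_drop (hs : 1 ≤ s) {n : ℕ} (σ : Fin n → Fin k) {j t : ℕ}
    (hj : OccursAt (τ 0) σ j) (hjt : j + m 0 ≤ t) (h : t ≤ n)
    (hc : ContainsMulti (fun j : Fin s => τ j.succ) (drop σ t h)) :
    ContainsMulti τ σ := by
  obtain ⟨i', hchain, hocc⟩ := hc
  set I : Fin (s + 1) → ℕ := fun jj => Fin.cases j (fun j' => t + i' j') jj with hI
  have hI0 : I 0 = j := rfl
  have hIs : ∀ j' : Fin s, I j'.succ = t + i' j' := fun j' => by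
    simp [hI]
  refine ⟨I, ?_, ?_⟩
  · rintro ⟨jv, hv⟩ hjj
    rcases jv with _ | jv
    · rw [show (⟨(↑(⟨0, hv⟩ : Fin (s + 1)) : ℕ) + 1, hjj⟩ : Fin (s + 1)) =
        (⟨0, by omega⟩ : Fin s).succ from rfl]
      rw [show (⟨0, hv⟩ : Fin (s + 1)) = 0 by ext; simp]
      rw [hI0, hIs]
      omega
    · have hjj' : jv + 1 + 1 < s + 1 := hjj
      rw [show (⟨(↑(⟨jv + 1, hv⟩ : Fin (s + 1)) : ℕ) + 1, hjj⟩ : Fin (s + 1)) =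
        (⟨jv + 1, by omega⟩ : Fin s).succ from rfl]
      rw [show (⟨jv + 1, hv⟩ : Fin (s + 1)) = (⟨jv, by omega⟩ : Fin s).succ from rfl]
      rw [hIs, hIs]
      have h1 : i' ⟨jv, by omega⟩ + m (⟨jv, by omega⟩ : Fin s).succ ≤ i' ⟨jv + 1, by omega⟩ :=
        hchain ⟨jv, by omega⟩ (by show jv + 1 < s; omega)
      omega
  · rintro ⟨jv, hv⟩
    rcases jv with _ | jv
    · rw [show (⟨0, hv⟩ : Fin (s + 1)) = 0 by ext; simp, hI0]
      exact hj
    · rw [show (⟨jv + 1, hv⟩ : Fin (s + 1)) = (⟨jv, by omega⟩ : Fin s).succ from rfl, hIs]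
      have h1 := hocc ⟨jv, by omega⟩
      rw [occ_drop_iff] at h1
      exact h1

lemma glue_t_eq {n t t' : ℕ} (h : t ≤ n) (h' : t' ≤ n)
    {α : Fin t → Fin k} {β : Fin (n - t) → Fin k}
    {α' : Fin t' → Fin k} {β' : Fin (n - t') → Fin k}
    (hα : QuasiAvoids (τ 0) α) (hα' : QuasiAvoids (τ 0) α') (htt : t ≤ t')
    (heq : glue t h α β = glue t' h' α' β') : t = t' := by
  have hmt := quasi_ge hα
  have hmt' := quasi_ge hα'
  have h1 : OccursAt (τ 0) (glue t h α β) (t - m 0) := occ_glue_quasi τ h hα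
  rw [heq] at h1
  have h2 := (occ_glue_left (τ 0) h' α' β' (by omega)).mp h1
  have h3 := hα'.2 _ h2
  omega

end Multi

section Count

variable {s : ℕ} {m r : Fin (s + 1) → ℕ} (τ : ∀ j : Fin (s + 1), Fin (m j) → Fin (r j))

lemma nat_card_sigma {ι : Type*} [Fintype ι] (f : ι → Type*) [∀ i, Finite (f i)] :
    Nat.card (Σ i, f i) = ∑ i, Nat.card (f i) := by
  letI : ∀ i, Fintype (f i) := fun i => Fintype.ofFinite _
  simp [Nat.card_eq_fintype_card, Fintype.card_sigma]

def Hmap (hs : 1 ≤ s) (n : ℕ) :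
    ({σ : Fin n → Fin k // AvoidsPat (τ 0) σ} ⊕
      Σ t : Fin (n + 1), {α : Fin (t : ℕ) → Fin k // QuasiAvoids (τ 0) α} ×
        {β : Fin (n - (t : ℕ)) → Fin k // ¬ ContainsMulti (fun j : Fin s => τ j.succ) β}) →
    {σ : Fin n → Fin k // ¬ ContainsMulti τ σ}
  | Sum.inl ⟨σ, hA⟩ => ⟨σ, not_contains_of_avoids τ hA⟩
  | Sum.inr ⟨t, ⟨α, hα⟩, ⟨β, hβ⟩⟩ =>
      ⟨glue (t : ℕ) (Nat.lt_succ_iff.mp t.isLt) α β, not_contains_glue τ hs _ hα hβ⟩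

lemma Hmap_bij (hs : 1 ≤ s) (n : ℕ) : Function.Bijective (Hmap (k := k) τ hs n) := by
  constructor
  · rintro (⟨σ, hA⟩ | ⟨⟨t, ht⟩, ⟨α, hα⟩, ⟨β, hβ⟩⟩) (⟨σ', hA'⟩ | ⟨⟨t', ht'⟩, ⟨α', hα'⟩, ⟨β', hβ'⟩⟩)
        hxy <;> simp only [Hmap, Subtype.mk.injEq] at hxy
    · subst hxy; rfl
    · exfalso
      have hocc := occ_glue_quasi τ (Nat.lt_succ_iff.mp (Fin.isLt ⟨t', ht'⟩)) (β := β') hα'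
      rw [← hxy] at hocc
      exact hA _ hocc
    · exfalso
      have hocc := occ_glue_quasi τ (Nat.lt_succ_iff.mp (Fin.isLt ⟨t, ht⟩)) (β := β) hα
      rw [hxy] at hocc
      exact hA' _ hocc
    · have htt : t = t' := by
        rcases le_total t t' with hle | hle
        · exact glue_t_eq τ _ _ hα hα' hle hxy
        · exact (glue_t_eq τ _ _ hα' hα hle hxy.symm).symm
      subst htt
      have e1 : α = α' := by
        rw [← take_glue t (Nat.lt_succ_iff.mp (Fin.isLt ⟨t, ht⟩)) α β, ← take_glue t
          (Nat.lt_succ_iff.mp (Fin.isLt ⟨t, ht'⟩)) α' β', hxy]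
      have e2 : β = β' := by
        rw [← drop_glue t (Nat.lt_succ_iff.mp (Fin.isLt ⟨t, ht⟩)) α β, ← drop_glue t
          (Nat.lt_succ_iff.mp (Fin.isLt ⟨t, ht'⟩)) α' β', hxy]
      subst e1
      subst e2
      rfl
  · rintro ⟨σ, hC⟩
    by_cases hA : AvoidsPat (τ 0) σ
    · exact ⟨Sum.inl ⟨σ, hA⟩, rfl⟩
    · have hex : ∃ i, OccursAt (τ 0) σ i := by
        unfold AvoidsPat at hA; push_neg at hA; exact hA
      set j := sInf {i | OccursAt (τ 0) σ i} with hjdef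
      have hjmem : OccursAt (τ 0) σ j := Nat.sInf_mem hex
      have ht : j + m 0 ≤ n := by obtain ⟨hb, -⟩ := hjmem; exact hb
      have hquasi : QuasiAvoids (τ 0) (take σ (j + m 0) ht) := by
        refine ⟨?_, ?_⟩
        · rw [occ_take_iff]
          refine ⟨by omega, ?_⟩
          rw [show j + m 0 - m 0 = j by omega]
          exact hjmem
        · intro i hi
          rw [occ_take_iff] at hi
          obtain ⟨h1, h2⟩ := hi
          have h3 : j ≤ i := Nat.sInf_le h2
          omega
      have hdrop : ¬ ContainsMulti (fun j : Fin s => τ j.succ) (drop σ (j + m 0) ht) :=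
        fun hcon => hC (contains_of_drop τ hs σ hjmem le_rfl ht hcon)
      refine ⟨Sum.inr ⟨⟨j + m 0, by omega⟩, ⟨take σ (j + m 0) ht, hquasi⟩,
        ⟨drop σ (j + m 0) ht, hdrop⟩⟩, ?_⟩
      exact Subtype.ext (glue_take_drop σ (j + m 0) ht)

lemma card_eq (hs : 1 ≤ s) (n : ℕ) :
    Nat.card {σ : Fin n → Fin k // ¬ ContainsMulti τ σ}
      = Nat.card {σ : Fin n → Fin k // AvoidsPat (τ 0) σ}
        + ∑ t : Fin (n + 1),
            Nat.card {α : Fin (t : ℕ) → Fin k // QuasiAvoids (τ 0) α} *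
              Nat.card {β : Fin (n - (t : ℕ)) → Fin k //
                ¬ ContainsMulti (fun j : Fin s => τ j.succ) β} := by
  rw [← Nat.card_eq_of_bijective _ (Hmap_bij (k := k) τ hs n), Nat.card_sum, nat_card_sigma]
  congr 1
  exact Finset.sum_congr rfl fun t _ => Nat.card_prod _ _

end Count

end S13

theorem stmt13 (s : ℕ) (hs : 1 ≤ s) (m r : Fin (s + 1) → ℕ) (hm0 : 1 ≤ m 0)
    (τ : ∀ j : Fin (s + 1), Fin (m j) → Fin (r j))
    (k : ℕ) (hk : 1 ≤ k) :
    Amulti τ k =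
      Apat (τ 0) k + Amulti (fun j : Fin s => τ j.succ) k * ApatStar (τ 0) k := by
  refine PowerSeries.ext fun n => ?_
  simp only [Amulti, Apat, ApatStar, map_add, PowerSeries.coeff_mk, PowerSeries.coeff_mul]
  rw [S13.card_eq τ hs n]
  push_cast
  congr 1
  rw [Finset.Nat.sum_antidiagonal_eq_sum_range_succ_mk,
    Fin.sum_univ_eq_sum_range (fun x => ((Nat.card {α : Fin x → Fin k // QuasiAvoids (τ 0) α} : ℚ) *
      (Nat.card {β : Fin (n - x) → Fin k // ¬ ContainsMulti (fun j : Fin s => τ j.succ) β} : ℚ))),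
    ← Finset.sum_range_reflect]
  refine Finset.sum_congr rfl fun j hj => ?_
  simp only [Finset.mem_range] at hj
  rw [show n + 1 - 1 - j = n - j by omega, show n - (n - j) = j by omega, mul_comm]
end

section
/- Let τ = τ¹-τ²-⋯-τˢ be a multi-pattern (s ≥ 1) with every block τʲ nonempty. Then for all k ≥ 1, in ℚ[[x]]: A_τ(x;k) = Σ_{j=1}^{s} A_{τʲ}(x;k) · Π_{i=1}^{j−1} ((k·x − 1)·A_{τⁱ}(x;k) + 1). -/
/-!
Sort the words avoiding `τ¹-τ²-⋯-τˢ` by their first block. Either a word avoids `τ¹`, or the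
leftmost occurrence of `τ¹` ends at some position `e`; in the latter case the word avoids the
multi-pattern iff its suffix after position `e` avoids `τ²-⋯-τˢ`, because the blocks following any
occurrence of `τ¹` start at or after `e`. With `D(x)` the generating function of the words whose
leftmost occurrence of `τ¹` ends at their last letter, this reads
`A_τ = A_{τ¹} + D · A_{τ²-⋯-τˢ}`. Appending a letter to a word avoiding `τ¹` gives a word that
either still avoids `τ¹` or is counted by `D`, so `D = (k x - 1) A_{τ¹} + 1`, the constant term
coming from the empty word; induction on `s` gives the formula.
-/

lemma Fin.prod_Iio_succ {M : Type*} [CommMonoid M] {s : ℕ} (f : Fin (s + 1) → M)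
    (j : Fin s) : ∏ i ∈ Finset.Iio j.succ, f i = f 0 * ∏ i ∈ Finset.Iio j, f i.succ := by
  rw [← Finset.Ico_bot, bot_eq_zero, ← Finset.mul_prod_Ioo_eq_prod_Ico (Fin.succ_pos j),
    ← Fin.map_succEmb_Iio, Finset.prod_map]
  rfl

namespace SubwordPattern

section Split

variable {α : Type*} {n e : ℕ}

def splitAt (h : e ≤ n) : (Fin n → α) ≃ (Fin e → α) × (Fin (n - e) → α) :=
  (((finCongr (Nat.add_sub_of_le h).symm).trans finSumFinEquiv.symm).arrowCongr
    (Equiv.refl α)).trans (Equiv.sumArrowEquivProdArrow _ _ _)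

lemma splitAt_snd_apply (h : e ≤ n) (σ : Fin n → α) (a : Fin (n - e)) :
    (splitAt h σ).2 a = σ ⟨e + a, by omega⟩ := rfl

lemma card_splitAt (h : e ≤ n) (P : (Fin e → α) → Prop) (Q : (Fin (n - e) → α) → Prop) :
    Nat.card {σ : Fin n → α // P (splitAt h σ).1 ∧ Q (splitAt h σ).2} =
      Nat.card {w // P w} * Nat.card {u // Q u} := by
  rw [← Nat.card_prod]
  exact Nat.card_congr (((splitAt h).subtypeEquiv fun _ => Iff.rfl).trans
    Equiv.subtypeProdEquivProd)

end Split

lemma card_subtype_eq_card_and_add_card_and_not {α : Type*} [Finite α] (p q : α → Prop) :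
    Nat.card {x // p x} = Nat.card {x // p x ∧ q x} + Nat.card {x // p x ∧ ¬ q x} := by
  classical
  rw [← Nat.card_sum]
  exact (Nat.card_congr (((Equiv.subtypeSubtypeEquivSubtypeInter p q).symm.sumCongr
    (Equiv.subtypeSubtypeEquivSubtypeInter p (¬ q ·)).symm).trans
    (Equiv.sumCompl fun x : {x // p x} => q x.1))).symm

variable {k : ℕ}

section Occurrence

variable {m l n : ℕ} (p : Fin m → Fin l)

lemma occursAt_splitAt_fst_iff {e : ℕ} (h : e ≤ n) (σ : Fin n → Fin k) (i : ℕ) :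
    OccursAt p (splitAt h σ).1 i ↔ i + m ≤ e ∧ OccursAt p σ i :=
  ⟨fun ⟨hi, hp⟩ => ⟨hi, hi.trans h, hp⟩, fun ⟨hi, _, hp⟩ => ⟨hi, hp⟩⟩

lemma occursAt_splitAt_snd_iff {e : ℕ} (h : e ≤ n) (σ : Fin n → Fin k) (i : ℕ) :
    OccursAt p (splitAt h σ).2 i ↔ OccursAt p σ (e + i) := by
  have shift : ∀ (a : Fin m) (ha : i + a < n - e),
      (splitAt h σ).2 ⟨i + a, ha⟩ = σ ⟨e + i + a, by omega⟩ := fun a ha => by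
    simp only [splitAt_snd_apply, Nat.add_assoc]
  constructor
  · rintro ⟨hi, hp⟩
    exact ⟨by omega, fun a b => by rw [← shift, ← shift]; exact hp a b⟩
  · rintro ⟨hi, hp⟩
    exact ⟨by omega, fun a b => by rw [shift, shift]; exact hp a b⟩

def IsFirstEnd (σ : Fin n → Fin k) (e : ℕ) : Prop :=
  (∃ i, i + m = e ∧ OccursAt p σ i) ∧ ∀ i, OccursAt p σ i → e ≤ i + m

variable {p}

lemma IsFirstEnd.not_avoidsPat {σ : Fin n → Fin k} {e : ℕ} (hσ : IsFirstEnd p σ e) :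
    ¬ AvoidsPat p σ := by
  obtain ⟨⟨i, -, hi⟩, -⟩ := hσ
  exact fun h => h i hi

lemma IsFirstEnd.le {σ : Fin n → Fin k} {e : ℕ} (hσ : IsFirstEnd p σ e) : e ≤ n := by
  obtain ⟨⟨i, rfl, hi, -⟩, -⟩ := hσ
  exact hi

lemma IsFirstEnd.unique {σ : Fin n → Fin k} {e e' : ℕ} (hσ : IsFirstEnd p σ e)
    (hσ' : IsFirstEnd p σ e') : e = e' := by
  obtain ⟨⟨i, rfl, hi⟩, hmin⟩ := hσ
  obtain ⟨⟨i', rfl, hi'⟩, hmin'⟩ := hσ'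
  exact le_antisymm (hmin i' hi') (hmin' i hi)

lemma exists_isFirstEnd {σ : Fin n → Fin k} (hσ : ¬ AvoidsPat p σ) : ∃ e, IsFirstEnd p σ e := by
  classical
  have hends : ∃ e, ∃ i, i + m = e ∧ OccursAt p σ i := by
    simp only [AvoidsPat, not_forall, not_not] at hσ
    obtain ⟨i, hi⟩ := hσ
    exact ⟨i + m, i, rfl, hi⟩
  exact ⟨Nat.find hends, Nat.find_spec hends, fun i hi => Nat.find_min' hends ⟨i, rfl, hi⟩⟩

lemma isFirstEnd_splitAt_fst_iff {σ : Fin n → Fin k} {e : ℕ} (h : e ≤ n) :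
    IsFirstEnd p (splitAt h σ).1 e ↔ IsFirstEnd p σ e := by
  simp only [IsFirstEnd, occursAt_splitAt_fst_iff]
  constructor
  · rintro ⟨⟨i, rfl, -, hi⟩, hmin⟩
    refine ⟨⟨i, rfl, hi⟩, fun j hj => ?_⟩
    by_contra! hlt
    exact absurd (hmin j ⟨hlt.le, hj⟩) (by omega)
  · rintro ⟨⟨i, rfl, hi⟩, hmin⟩
    exact ⟨⟨i, rfl, le_rfl, hi⟩, fun j hj => hmin j hj.2⟩

lemma isFirstEnd_zero_iff (σ : Fin 0 → Fin k) : IsFirstEnd p σ 0 ↔ ¬ AvoidsPat p σ := by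
  refine ⟨IsFirstEnd.not_avoidsPat, fun hσ => ?_⟩
  obtain ⟨e, he⟩ := exists_isFirstEnd hσ
  obtain rfl := Nat.le_zero.1 he.le
  exact he

lemma isFirstEnd_succ_iff {f : ℕ} (σ : Fin (f + 1) → Fin k) :
    IsFirstEnd p σ (f + 1) ↔ AvoidsPat p (splitAt f.le_succ σ).1 ∧ ¬ AvoidsPat p σ := by
  have ends_late : AvoidsPat p (splitAt f.le_succ σ).1 ↔ ∀ i, OccursAt p σ i → f + 1 ≤ i + m := by
    refine forall_congr' fun i => ?_
    rw [occursAt_splitAt_fst_iff, not_and', not_le, Nat.lt_iff_add_one_le]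
  refine ⟨fun hσ => ⟨ends_late.2 hσ.2, hσ.not_avoidsPat⟩, fun ⟨hpre, hσ⟩ => ?_⟩
  obtain ⟨i, hi⟩ : ∃ i, OccursAt p σ i := by simpa [AvoidsPat] using hσ
  exact ⟨⟨i, le_antisymm hi.1 (ends_late.1 hpre i hi), hi⟩, ends_late.1 hpre⟩

end Occurrence

section FirstEndSeries

variable {m l : ℕ} (p : Fin m → Fin l)

noncomputable def firstEndSeries (k : ℕ) : PowerSeries ℚ :=
  PowerSeries.mk fun e => (Nat.card {w : Fin e → Fin k // IsFirstEnd p w e} : ℚ)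

lemma card_isFirstEnd_zero_add_card_avoidsPat :
    Nat.card {w : Fin 0 → Fin k // IsFirstEnd p w 0} +
      Nat.card {w : Fin 0 → Fin k // AvoidsPat p w} = 1 := by
  have := card_subtype_eq_card_and_add_card_and_not (fun _ : Fin 0 → Fin k => True) (AvoidsPat p)
  simp only [Nat.card_subtype_true, true_and, ← isFirstEnd_zero_iff] at this
  simpa [add_comm] using this.symm

lemma card_isFirstEnd_succ_add_card_avoidsPat (f : ℕ) :
    Nat.card {w : Fin (f + 1) → Fin k // IsFirstEnd p w (f + 1)} +
      Nat.card {w : Fin (f + 1) → Fin k // AvoidsPat p w} =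
      Nat.card {w : Fin f → Fin k // AvoidsPat p w} * k := by
  have avoidsPat_prefix (w : Fin (f + 1) → Fin k) (hw : AvoidsPat p w) :
      AvoidsPat p (splitAt f.le_succ w).1 :=
    fun i hi => hw i ((occursAt_splitAt_fst_iff p _ w i).1 hi).2
  calc _ = Nat.card {w : Fin (f + 1) → Fin k //
          AvoidsPat p (splitAt f.le_succ w).1 ∧ AvoidsPat p w} +
        Nat.card {w : Fin (f + 1) → Fin k //
          AvoidsPat p (splitAt f.le_succ w).1 ∧ ¬ AvoidsPat p w} := by
        rw [add_comm]
        congr 1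
        · exact Nat.card_congr (Equiv.subtypeEquivRight fun w =>
            ⟨fun hw => ⟨avoidsPat_prefix w hw, hw⟩, And.right⟩)
        · exact Nat.card_congr (Equiv.subtypeEquivRight fun w => isFirstEnd_succ_iff w)
    _ = Nat.card {w : Fin (f + 1) → Fin k // AvoidsPat p (splitAt f.le_succ w).1 ∧ True} := by
        rw [← card_subtype_eq_card_and_add_card_and_not]
        simp only [and_true]
    _ = Nat.card {w : Fin f → Fin k // AvoidsPat p w} * k := by
        rw [card_splitAt f.le_succ (AvoidsPat p) (fun _ => True)]
        simp

lemma firstEndSeries_eq :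
    firstEndSeries p k = ((k : PowerSeries ℚ) * PowerSeries.X - 1) * Apat p k + 1 := by
  ext (_ | f)
  · simp [firstEndSeries, Apat, neg_add_eq_sub, eq_sub_iff_add_eq]
    exact_mod_cast card_isFirstEnd_zero_add_card_avoidsPat p
  · rw [← map_natCast PowerSeries.C]
    simp only [firstEndSeries, Apat, sub_mul, mul_assoc, map_add, map_sub, PowerSeries.coeff_mk,
      PowerSeries.coeff_C_mul, PowerSeries.coeff_succ_X_mul, one_mul, PowerSeries.coeff_one,
      if_neg f.succ_ne_zero, add_zero, eq_sub_iff_add_eq]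
    exact_mod_cast (card_isFirstEnd_succ_add_card_avoidsPat p f).trans (mul_comm _ _)

end FirstEndSeries

section MultiPattern

variable {s : ℕ}

def IsSpaced (m i : Fin s → ℕ) : Prop :=
  ∀ (j : Fin s) (h : (j : ℕ) + 1 < s), i j + m j ≤ i ⟨(j : ℕ) + 1, h⟩

lemma IsSpaced.add_le {m i : Fin s → ℕ} (hi : IsSpaced m i) {j j' : Fin s} (hjj' : j < j') :
    i j + m j ≤ i j' := by
  obtain ⟨t, ht⟩ := j'
  induction t with
  | zero => exact absurd (Fin.lt_def.1 hjj') (Nat.not_lt_zero _)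
  | succ t ih =>
    have step : i ⟨t, by omega⟩ + m ⟨t, by omega⟩ ≤ i ⟨t + 1, ht⟩ := hi ⟨t, by omega⟩ ht
    rcases (Nat.lt_succ_iff_lt_or_eq.1 (Fin.lt_def.1 hjj')) with hlt | rfl
    · have := ih (by omega) (Fin.lt_def.2 hlt)
      omega
    · exact step

section

variable {m r : Fin s → ℕ}

def ContainsMultiFrom (τ : ∀ j : Fin s, Fin (m j) → Fin (r j)) {n k : ℕ} (σ : Fin n → Fin k)
    (e : ℕ) : Prop :=
  ∃ i : Fin s → ℕ, IsSpaced m i ∧ ∀ j, e ≤ i j ∧ OccursAt (τ j) σ (i j)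

lemma ContainsMultiFrom.mono {τ : ∀ j : Fin s, Fin (m j) → Fin (r j)} {n : ℕ}
    {σ : Fin n → Fin k} {e e' : ℕ} (h : ContainsMultiFrom τ σ e) (he : e' ≤ e) :
    ContainsMultiFrom τ σ e' := by
  obtain ⟨i, hi, hocc⟩ := h
  exact ⟨i, hi, fun j => ⟨he.trans (hocc j).1, (hocc j).2⟩⟩

lemma containsMulti_splitAt_snd_iff (τ : ∀ j : Fin s, Fin (m j) → Fin (r j)) {n e : ℕ}
    (h : e ≤ n) (σ : Fin n → Fin k) :
    ContainsMulti τ (splitAt h σ).2 ↔ ContainsMultiFrom τ σ e := by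
  simp only [ContainsMulti, ContainsMultiFrom, IsSpaced, occursAt_splitAt_snd_iff]
  constructor
  · rintro ⟨i, hi, hocc⟩
    exact ⟨fun j => e + i j, fun j hj => by dsimp only; have := hi j hj; omega,
      fun j => ⟨Nat.le_add_right e (i j), hocc j⟩⟩
  · rintro ⟨i, hi, hocc⟩
    refine ⟨fun j => i j - e, fun j hj => ?_, fun j => ?_⟩
    · dsimp only
      have := hi j hj
      have := (hocc j).1
      omega
    · rw [Nat.add_sub_cancel' (hocc j).1]
      exact (hocc j).2

end

lemma amulti_of_fin_zero {m r : Fin 0 → ℕ} (τ : ∀ j : Fin 0, Fin (m j) → Fin (r j)) :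
    Amulti τ k = 0 := by
  ext n
  have : IsEmpty {σ : Fin n → Fin k // ¬ ContainsMulti τ σ} :=
    ⟨fun σ => σ.2 ⟨Fin.elim0, fun j => j.elim0, fun j => j.elim0⟩⟩
  simp [Amulti]

section Cons

variable {m r : Fin (s + 1) → ℕ} (τ : ∀ j : Fin (s + 1), Fin (m j) → Fin (r j))

lemma containsMulti_succ_iff {n : ℕ} (σ : Fin n → Fin k) :
    ContainsMulti τ σ ↔ ∃ i₀, OccursAt (τ 0) σ i₀ ∧
      ContainsMultiFrom (fun j : Fin s => τ j.succ) σ (i₀ + m 0) := by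
  constructor
  · rintro ⟨i, hi, hocc⟩
    exact ⟨i 0, hocc 0, fun j => i j.succ, fun j hj => hi j.succ (by simpa using hj),
      fun j => ⟨IsSpaced.add_le hi (Fin.succ_pos j), hocc j.succ⟩⟩
  · rintro ⟨i₀, h₀, i, hi, hocc⟩
    refine ⟨Fin.cons i₀ i, fun j hj => ?_, Fin.cases h₀ fun j => (hocc j).2⟩
    cases j using Fin.cases with
    | zero => exact (hocc ⟨0, by omega⟩).1
    | succ j => exact hi j (by simpa using hj)

variable {τ} in
lemma IsFirstEnd.containsMulti_iff {n e : ℕ} {σ : Fin n → Fin k} (hσ : IsFirstEnd (τ 0) σ e) :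
    ContainsMulti τ σ ↔ ContainsMulti (fun j : Fin s => τ j.succ) (splitAt hσ.le σ).2 := by
  rw [containsMulti_succ_iff, containsMulti_splitAt_snd_iff]
  obtain ⟨⟨i₀, rfl, h₀⟩, hmin⟩ := hσ
  exact ⟨fun ⟨i, hi, hfrom⟩ => hfrom.mono (hmin i hi), fun hfrom => ⟨i₀, h₀, hfrom⟩⟩

lemma card_isFirstEnd_and_not_containsMulti {n e : ℕ} (h : e ≤ n) :
    Nat.card {σ : Fin n → Fin k // IsFirstEnd (τ 0) σ e ∧ ¬ ContainsMulti τ σ} =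
      Nat.card {w : Fin e → Fin k // IsFirstEnd (τ 0) w e} *
        Nat.card {u : Fin (n - e) → Fin k // ¬ ContainsMulti (fun j : Fin s => τ j.succ) u} := by
  rw [← card_splitAt h]
  refine Nat.card_congr (Equiv.subtypeEquivRight fun σ => ?_)
  rw [isFirstEnd_splitAt_fst_iff]
  exact and_congr_right fun hσ => not_congr hσ.containsMulti_iff

lemma card_not_containsMulti_and_not_avoidsPat (n : ℕ) :
    Nat.card {σ : Fin n → Fin k // ¬ ContainsMulti τ σ ∧ ¬ AvoidsPat (τ 0) σ} =
      ∑ e : Fin (n + 1),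
        Nat.card {σ : Fin n → Fin k // IsFirstEnd (τ 0) σ e ∧ ¬ ContainsMulti τ σ} := by
  let firstEnd (σ : {σ : Fin n → Fin k // ¬ ContainsMulti τ σ ∧ ¬ AvoidsPat (τ 0) σ}) :
      Fin (n + 1) :=
    ⟨_, Nat.lt_succ_of_le (exists_isFirstEnd σ.2.2).choose_spec.le⟩
  have firstEnd_eq_iff (σ) (e : Fin (n + 1)) : firstEnd σ = e ↔ IsFirstEnd (τ 0) σ.1 e :=
    ⟨fun h => h ▸ (exists_isFirstEnd σ.2.2).choose_spec,
      fun h => Fin.ext ((exists_isFirstEnd σ.2.2).choose_spec.unique h)⟩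
  rw [← Nat.card_congr (Equiv.sigmaFiberEquiv firstEnd), Nat.card_sigma]
  refine Finset.sum_congr rfl fun e _ => Nat.card_congr
    { toFun := fun σ => ⟨σ.1.1, (firstEnd_eq_iff _ _).1 σ.2, σ.1.2.1⟩
      invFun := fun σ => ⟨⟨σ.1, σ.2.2, σ.2.1.not_avoidsPat⟩, (firstEnd_eq_iff _ _).2 σ.2.1⟩
      left_inv := fun _ => rfl
      right_inv := fun _ => rfl }

lemma amulti_succ :
    Amulti τ k = Apat (τ 0) k + firstEndSeries (τ 0) k * Amulti (fun j : Fin s => τ j.succ) k := by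
  ext n
  rw [map_add, PowerSeries.coeff_mul, Finset.Nat.sum_antidiagonal_eq_sum_range_succ_mk,
    ← Fin.sum_univ_eq_sum_range]
  simp only [Amulti, Apat, firstEndSeries, PowerSeries.coeff_mk]
  rw [card_subtype_eq_card_and_add_card_and_not _ (AvoidsPat (τ 0)),
    card_not_containsMulti_and_not_avoidsPat]
  push_cast
  congr 1
  · refine congrArg _ (Nat.card_congr (Equiv.subtypeEquivRight fun σ =>
      ⟨And.right, fun hσ => ⟨fun ⟨i, _, hocc⟩ => hσ (i 0) (hocc 0), hσ⟩⟩))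
  · exact Finset.sum_congr rfl fun e _ => by
      rw [card_isFirstEnd_and_not_containsMulti τ (Nat.lt_succ_iff.1 e.2)]
      push_cast
      rfl

end Cons

end MultiPattern

end SubwordPattern

open SubwordPattern

theorem stmt14_general (s : ℕ) (m r : Fin s → ℕ)
    (τ : ∀ j : Fin s, Fin (m j) → Fin (r j)) (k : ℕ) :
    Amulti τ k =
      ∑ j : Fin s, Apat (τ j) k *
        ∏ i ∈ Finset.Iio j,
          (((k : PowerSeries ℚ) * PowerSeries.X - 1) * Apat (τ i) k + 1) := by
  induction s with
  | zero => simp [amulti_of_fin_zero]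
  | succ s ih =>
    rw [amulti_succ, ih, firstEndSeries_eq, Fin.sum_univ_succ, Finset.mul_sum]
    congr 1
    · rw [Finset.Iio_eq_empty.2 fun b _ => Fin.zero_le b, Finset.prod_empty, mul_one]
    · exact Finset.sum_congr rfl fun j _ => by rw [Fin.prod_Iio_succ, mul_left_comm]

theorem stmt14 (s : ℕ) (hs : 1 ≤ s) (m r : Fin s → ℕ) (hm : ∀ j, 1 ≤ m j)
    (τ : ∀ j : Fin s, Fin (m j) → Fin (r j)) (k : ℕ) (hk : 1 ≤ k) :
    Amulti τ k =
      ∑ j : Fin s, Apat (τ j) k *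
        ∏ i ∈ Finset.Iio j,
          (((k : PowerSeries ℚ) * PowerSeries.X - 1) * Apat (τ i) k + 1) :=
  stmt14_general s m r τ k
end

section
/- Let p be a nonempty subword pattern of length m and k ≥ 1. For a word σ of length n let N_p(σ) be the maximum number of pairwise non-overlapping occurrences of p in σ, and let c(n, s) = #{σ : Fin n → Fin k | N_p(σ) = s}. Then in the ring of formal power series in two variables x, y over ℚ: (Σ_{n≥0} Σ_{s≥0} c(n, s)·xⁿ·yˢ) · (1 − y·((k·x − 1)·Ā_p + 1)) = Ā_p, where Ā_p denotes A_p(x;k) = Σ_{n≥0} (number of k-ary words of length n avoiding p)·xⁿ viewed as a power series in x and y. -/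
/-- `σ` has `t` pairwise non-overlapping occurrences of the subword pattern `p`. -/
def HasNonOverlapping {m l n k : ℕ} (p : Fin m → Fin l) (σ : Fin n → Fin k) (t : ℕ) : Prop :=
  ∃ i : Fin t → ℕ,
    (∀ (j : Fin t) (h : (j : ℕ) + 1 < t), i j + m ≤ i ⟨(j : ℕ) + 1, h⟩) ∧
      ∀ j : Fin t, OccursAt p σ (i j)

/-- `N_p(σ)`: the maximum number of pairwise non-overlapping occurrences of `p` in `σ`. -/
noncomputable def NOcc {m l n k : ℕ} (p : Fin m → Fin l) (σ : Fin n → Fin k) : ℕ :=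
  sSup {t : ℕ | HasNonOverlapping p σ t}

/-- The two-variable generating function `Σ_{n,s} c(n,s) xⁿ yˢ`, where `c(n,s)` is the
number of `k`-ary words of length `n` with exactly `s` non-overlapping occurrences of `p`. -/
noncomputable def Fgen {m l : ℕ} (p : Fin m → Fin l) (k : ℕ) : MvPowerSeries (Fin 2) ℚ :=
  fun d => (Nat.card {σ : Fin (d 0) → Fin k // NOcc p σ = d 1} : ℚ)

/-- `A_p(x;k)` viewed as a two-variable power series (constant in `y`). -/
noncomputable def AbarPat {m l : ℕ} (p : Fin m → Fin l) (k : ℕ) : MvPowerSeries (Fin 2) ℚ :=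
  fun d => if d 1 = 0 then (Nat.card {σ : Fin (d 0) → Fin k // AvoidsPat p σ} : ℚ) else 0

/-
A word with `N_p(σ) = s + 1` splits uniquely as `σ = τ ρ` at the end of its first occurrence
of `p`: `τ` contains `p` but no proper prefix of `τ` does, and `N_p(ρ) = s`, because a maximal
family of non-overlapping occurrences may always start with the first occurrence. Writing
`E(x) = ∑ₐ e(a) xᵃ` for the generating function of such minimal words `τ`, this gives
`c(n, s + 1) = ∑ₐ e(a) c(n - a, s)` and `c(n, 0) = A(n)`, that is `F = A + y E F`.
Appending a letter to a word avoiding `p` gives either a word avoiding `p` or a minimal word,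
and every word of either kind arises exactly once, so `k A(j) = A(j + 1) + e(j + 1)`, that is
`E = (k x - 1) A + 1`.
-/

lemma Nat.card_subtype_eq_sum_range {α : Type*} [Finite α] (P : α → Prop) (f : α → ℕ) {n : ℕ}
    (hf : ∀ x, P x → f x ≤ n) :
    Nat.card {x // P x} = ∑ a ∈ Finset.range (n + 1), Nat.card {x // P x ∧ f x = a} := by
  let g : {x // P x} → Fin (n + 1) := fun x => ⟨f x, Nat.lt_succ_of_le (hf x x.2)⟩
  rw [Nat.card_congr (Equiv.sigmaFiberEquiv g).symm, Nat.card_sigma,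
    ← Fin.sum_univ_eq_sum_range (fun a => Nat.card {x // P x ∧ f x = a})]
  exact Finset.sum_congr rfl fun a _ => Nat.card_congr <|
    (Equiv.subtypeEquivRight fun _ => Fin.ext_iff).trans
      (Equiv.subtypeSubtypeEquivSubtypeInter P fun x => f x = a)

lemma Nat.card_subtype_eq_card_and_add_card_and_not {α : Type*} [Finite α] (P Q : α → Prop) :
    Nat.card {x // P x} = Nat.card {x // P x ∧ Q x} + Nat.card {x // P x ∧ ¬ Q x} := by
  classical
  rw [← Nat.card_sum]
  exact Nat.card_congr <| (Equiv.sumCompl fun x : {x // P x} => Q x).symm.trans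
    (Equiv.sumCongr (Equiv.subtypeSubtypeEquivSubtypeInter P Q)
      (Equiv.subtypeSubtypeEquivSubtypeInter P fun x => ¬ Q x))

namespace BivariateSeries

open MvPowerSeries Finset

variable {R : Type*} [CommSemiring R]

/-- The exponent of `xⁿ yˢ`, where `x = X 0` and `y = X 1`. -/
noncomputable def bideg (n s : ℕ) : Fin 2 →₀ ℕ := Finsupp.single 0 n + Finsupp.single 1 s

@[simp] lemma bideg_apply_zero (n s : ℕ) : bideg n s 0 = n := by simp [bideg]

@[simp] lemma bideg_apply_one (n s : ℕ) : bideg n s 1 = s := by simp [bideg]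

lemma bideg_eq_zero_iff {n s : ℕ} : bideg n s = 0 ↔ n = 0 ∧ s = 0 := by
  simp [Finsupp.ext_iff, Fin.forall_fin_two]

lemma bideg_apply_zero_apply_one (d : Fin 2 →₀ ℕ) : bideg (d 0) (d 1) = d := by
  ext i; fin_cases i <;> simp

lemma ext_bideg {φ ψ : MvPowerSeries (Fin 2) R}
    (h : ∀ n s, coeff (bideg n s) φ = coeff (bideg n s) ψ) : φ = ψ :=
  ext fun d => by simpa only [bideg_apply_zero_apply_one] using h (d 0) (d 1)

lemma coeff_bideg_succ_X_zero_mul (φ : MvPowerSeries (Fin 2) R) (n s : ℕ) :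
    coeff (bideg (n + 1) s) (X 0 * φ) = coeff (bideg n s) φ := by
  have hd : bideg (n + 1) s = Finsupp.single 0 1 + bideg n s := by
    ext i; fin_cases i <;> simp [add_comm]
  rw [hd, X_def, coeff_add_monomial_mul, one_mul]

lemma coeff_bideg_zero_X_zero_mul (φ : MvPowerSeries (Fin 2) R) (s : ℕ) :
    coeff (bideg 0 s) (X 0 * φ) = 0 := by
  rw [X_def, coeff_monomial_mul, if_neg]
  simp [Finsupp.single_le_iff]

lemma coeff_bideg_succ_X_one_mul (φ : MvPowerSeries (Fin 2) R) (n s : ℕ) :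
    coeff (bideg n (s + 1)) (X 1 * φ) = coeff (bideg n s) φ := by
  have hd : bideg n (s + 1) = Finsupp.single 1 1 + bideg n s := by
    ext i; fin_cases i <;> simp [add_comm]
  rw [hd, X_def, coeff_add_monomial_mul, one_mul]

lemma coeff_bideg_zero_X_one_mul (φ : MvPowerSeries (Fin 2) R) (n : ℕ) :
    coeff (bideg n 0) (X 1 * φ) = 0 := by
  rw [X_def, coeff_monomial_mul, if_neg]
  simp [Finsupp.single_le_iff]

def xSeries (a : ℕ → R) : MvPowerSeries (Fin 2) R := fun d => if d 1 = 0 then a (d 0) else 0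

lemma coeff_bideg_xSeries (a : ℕ → R) (n s : ℕ) :
    coeff (bideg n s) (xSeries a) = if s = 0 then a n else 0 := by
  simp [xSeries, coeff_apply]

lemma coeff_bideg_xSeries_mul (a : ℕ → R) (φ : MvPowerSeries (Fin 2) R) (n s : ℕ) :
    coeff (bideg n s) (xSeries a * φ) =
      ∑ ij ∈ antidiagonal n, a ij.1 * coeff (bideg ij.2 s) φ := by
  classical
  rw [coeff_mul]
  symm
  refine sum_of_injOn (fun ij => (bideg ij.1 0, bideg ij.2 s)) ?_ ?_ ?_ ?_
  · intro ij _ ij' _ h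
    simp only [Prod.mk.injEq] at h
    exact Prod.ext (by simpa using congrArg (· 0) h.1) (by simpa using congrArg (· 0) h.2)
  · intro ij hij
    rw [mem_coe, HasAntidiagonal.mem_antidiagonal] at hij ⊢
    ext i; fin_cases i <;> simp [← hij]
  · rintro ⟨d, e⟩ hde hnot
    rw [HasAntidiagonal.mem_antidiagonal] at hde
    have h0 := congrArg (· 0) hde
    have h1 := congrArg (· 1) hde
    simp only [Finsupp.add_apply, bideg_apply_zero, bideg_apply_one] at h0 h1
    by_cases hd : d 1 = 0
    · refine absurd ⟨(d 0, e 0), by simpa using h0, ?_⟩ hnot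
      have he : e 1 = s := by omega
      exact Prod.ext (by dsimp only; rw [← hd, bideg_apply_zero_apply_one])
        (by dsimp only; rw [← he, bideg_apply_zero_apply_one])
    · simp [xSeries, coeff_apply, hd]
  · intro ij _
    simp [coeff_bideg_xSeries]

end BivariateSeries

namespace SubwordPattern

variable {m l k : ℕ} {p : Fin m → Fin l}

lemma occursAt_congr {n n' : ℕ} {σ : Fin n → Fin k} {σ' : Fin n' → Fin k} {i i' : ℕ}
    (h' : i' + m ≤ n')
    (he : ∀ (a : ℕ) (ha : i + a < n) (ha' : i' + a < n'), σ ⟨i + a, ha⟩ = σ' ⟨i' + a, ha'⟩)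
    (h : OccursAt p σ i) : OccursAt p σ' i' := by
  obtain ⟨h, hocc⟩ := h
  refine ⟨h', fun a b => ?_⟩
  rw [← he a (by omega) (by omega), ← he b (by omega) (by omega)]
  exact hocc a b

lemma avoidsPat_of_length_lt {n : ℕ} (h : n < m) (σ : Fin n → Fin k) : AvoidsPat p σ :=
  fun _ hi => by have := hi.1; omega

lemma hasNonOverlapping_iff {n t : ℕ} {σ : Fin n → Fin k} :
    HasNonOverlapping p σ t ↔
      ∃ i : ℕ → ℕ, (∀ j, j + 1 < t → i j + m ≤ i (j + 1)) ∧ ∀ j < t, OccursAt p σ (i j) := by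
  constructor
  · rintro ⟨i, hsep, hocc⟩
    refine ⟨fun j => if h : j < t then i ⟨j, h⟩ else 0, fun j hj => ?_, fun j hj => ?_⟩
    · simpa [hj, show j < t by omega] using hsep ⟨j, by omega⟩ hj
    · simpa [hj] using hocc ⟨j, hj⟩
  · rintro ⟨i, hsep, hocc⟩
    exact ⟨fun j => i j, fun j hj => hsep j hj, fun j => hocc j j.2⟩

lemma hasNonOverlapping_zero {n : ℕ} (σ : Fin n → Fin k) : HasNonOverlapping p σ 0 :=
  ⟨Fin.elim0, fun j => j.elim0, fun j => j.elim0⟩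

lemma OccursAt.hasNonOverlapping_one {n i : ℕ} {σ : Fin n → Fin k} (h : OccursAt p σ i) :
    HasNonOverlapping p σ 1 :=
  ⟨fun _ => i, fun _ hj => by omega, fun _ => h⟩

lemma HasNonOverlapping.le_length (hm : 0 < m) {n t : ℕ} {σ : Fin n → Fin k}
    (h : HasNonOverlapping p σ t) : t ≤ n := by
  obtain ⟨i, hsep, hocc⟩ := hasNonOverlapping_iff.1 h
  have hi : ∀ j < t, j ≤ i j := by
    intro j
    induction j with
    | zero => intro _; omega
    | succ j ih => intro hj; have := hsep j hj; have := ih (by omega); omega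
  cases t with
  | zero => omega
  | succ t => have := hi t (by omega); have := (hocc t (by omega)).1; omega

lemma isGreatest_nOcc (hm : 0 < m) {n : ℕ} (σ : Fin n → Fin k) :
    IsGreatest {t | HasNonOverlapping p σ t} (NOcc p σ) := by
  have hbdd : BddAbove {t | HasNonOverlapping p σ t} :=
    ⟨n, fun _ h => HasNonOverlapping.le_length hm h⟩
  exact ⟨Nat.sSup_mem ⟨0, hasNonOverlapping_zero σ⟩ hbdd, fun _ h => le_csSup hbdd h⟩

lemma nOcc_eq_zero_iff (hm : 0 < m) {n : ℕ} (σ : Fin n → Fin k) :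
    NOcc p σ = 0 ↔ AvoidsPat p σ := by
  refine ⟨fun h i hocc => ?_, fun hav => ?_⟩
  · have := (isGreatest_nOcc hm σ).2 (OccursAt.hasNonOverlapping_one hocc)
    omega
  · refine IsGreatest.csSup_eq ⟨hasNonOverlapping_zero σ, fun t ⟨i, _, hocc⟩ => ?_⟩
    by_contra ht
    exact hav _ (hocc ⟨0, by omega⟩)

variable (p) in
/-- No proper prefix of `τ` contains `p`. -/
def IsMinimalNonAvoiding {a : ℕ} (τ : Fin a → Fin k) : Prop :=
  ¬ AvoidsPat p τ ∧ ∀ i, OccursAt p τ i → a ≤ i + m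

variable (p) in
/-- Meaningful only when `σ` contains `p`; otherwise it is the junk value `m`. -/
noncomputable def firstOccurrenceEnd {n : ℕ} (σ : Fin n → Fin k) : ℕ :=
  sInf {i | OccursAt p σ i} + m

lemma firstOccurrenceEnd_le {n : ℕ} {σ : Fin n → Fin k} (h : ¬ AvoidsPat p σ) :
    firstOccurrenceEnd p σ ≤ n :=
  (Nat.sInf_mem (not_forall_not.1 h)).1

section Append

variable {a b : ℕ} {τ : Fin a → Fin k} {ρ : Fin b → Fin k}

lemma occursAt_append_left_iff {i : ℕ} (hi : i + m ≤ a) :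
    OccursAt p (Fin.append τ ρ) i ↔ OccursAt p τ i := by
  have he : ∀ (x : ℕ) (hx : i + x < a) (hx' : i + x < a + b),
      τ ⟨i + x, hx⟩ = Fin.append τ ρ ⟨i + x, hx'⟩ :=
    fun x hx _ => (Fin.append_left τ ρ ⟨i + x, hx⟩).symm
  exact ⟨occursAt_congr hi fun x hx' hx => (he x hx hx').symm,
    occursAt_congr (by omega) fun x hx hx' => he x hx hx'⟩

lemma occursAt_append_right_iff {i : ℕ} :
    OccursAt p (Fin.append τ ρ) (a + i) ↔ OccursAt p ρ i := by
  have he : ∀ (x : ℕ) (hx : i + x < b) (hx' : a + i + x < a + b),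
      ρ ⟨i + x, hx⟩ = Fin.append τ ρ ⟨a + i + x, hx'⟩ := fun x hx _ => by
    rw [← Fin.append_right τ ρ ⟨i + x, hx⟩]
    exact congrArg _ (Fin.ext (by simp; omega))
  exact ⟨fun h => occursAt_congr (by have := h.1; omega) (fun x hx' hx => (he x hx hx').symm) h,
    fun h => occursAt_congr (by have := h.1; omega) (fun x hx hx' => he x hx hx') h⟩

lemma AvoidsPat.of_append (h : AvoidsPat p (Fin.append τ ρ)) : AvoidsPat p τ :=
  fun i hi => h i ((occursAt_append_left_iff hi.1).2 hi)

lemma HasNonOverlapping.append_left {t : ℕ} (hτ : ¬ AvoidsPat p τ)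
    (h : HasNonOverlapping p ρ t) : HasNonOverlapping p (Fin.append τ ρ) (t + 1) := by
  obtain ⟨i₀, hi₀⟩ := not_forall_not.1 hτ
  obtain ⟨i, hsep, hocc⟩ := hasNonOverlapping_iff.1 h
  refine hasNonOverlapping_iff.2
    ⟨fun | 0 => i₀ | j + 1 => a + i j, fun j hj => ?_, fun j hj => ?_⟩
  · rcases j with _ | j
    · have := hi₀.1; dsimp only; omega
    · have := hsep j (by omega); dsimp only; omega
  · rcases j with _ | j
    · exact (occursAt_append_left_iff hi₀.1).2 hi₀
    · exact occursAt_append_right_iff.2 (hocc j (by omega))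

lemma HasNonOverlapping.of_append {t : ℕ}
    (hend : ∀ i, OccursAt p (Fin.append τ ρ) i → a ≤ i + m)
    (h : HasNonOverlapping p (Fin.append τ ρ) (t + 1)) : HasNonOverlapping p ρ t := by
  obtain ⟨i, hsep, hocc⟩ := hasNonOverlapping_iff.1 h
  have hge : ∀ j < t, a ≤ i (j + 1) := fun j hj => by
    have := hsep j (by omega); have := hend _ (hocc j (by omega)); omega
  refine hasNonOverlapping_iff.2 ⟨fun j => i (j + 1) - a, fun j hj => ?_, fun j hj => ?_⟩
  · have := hsep (j + 1) (by omega); have := hge j (by omega); dsimp only; omega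
  · rw [← occursAt_append_right_iff (τ := τ), Nat.add_sub_cancel' (hge j hj)]
    exact hocc (j + 1) (by omega)

lemma firstOccurrenceEnd_append_eq_iff (h : ¬ AvoidsPat p (Fin.append τ ρ)) :
    firstOccurrenceEnd p (Fin.append τ ρ) = a ↔ IsMinimalNonAvoiding p τ := by
  have hfirst := Nat.sInf_mem (not_forall_not.1 h)
  set i₀ := sInf {i | OccursAt p (Fin.append τ ρ) i}
  have hle : ∀ i, OccursAt p (Fin.append τ ρ) i → i₀ ≤ i := fun i hi => Nat.sInf_le hi
  unfold firstOccurrenceEnd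
  constructor
  · intro hend
    refine ⟨fun hav => hav i₀ ((occursAt_append_left_iff hend.le).1 hfirst), fun i hi => ?_⟩
    have := hle i ((occursAt_append_left_iff hi.1).2 hi)
    omega
  · rintro ⟨hτ, hend⟩
    obtain ⟨i, hi⟩ := not_forall_not.1 hτ
    have h₁ := hle i ((occursAt_append_left_iff hi.1).2 hi)
    have h₂ := hend i₀ ((occursAt_append_left_iff (by have := hi.1; omega)).1 hfirst)
    have := hi.1
    omega

lemma nOcc_append_of_isMinimalNonAvoiding (hm : 0 < m) (hτ : IsMinimalNonAvoiding p τ) :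
    NOcc p (Fin.append τ ρ) = NOcc p ρ + 1 := by
  have hend : ∀ i, OccursAt p (Fin.append τ ρ) i → a ≤ i + m := fun i hi => by
    by_contra hlt
    exact hlt (hτ.2 i ((occursAt_append_left_iff (by omega)).1 hi))
  refine IsGreatest.csSup_eq ⟨HasNonOverlapping.append_left hτ.1 (isGreatest_nOcc hm ρ).1,
    fun t ht => ?_⟩
  rcases t with _ | t
  · omega
  · exact Nat.succ_le_succ ((isGreatest_nOcc hm ρ).2 (HasNonOverlapping.of_append hend ht))

lemma nOcc_append_eq_succ_and_firstOccurrenceEnd_eq_iff (hm : 0 < m) {s : ℕ} :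
    NOcc p (Fin.append τ ρ) = s + 1 ∧ firstOccurrenceEnd p (Fin.append τ ρ) = a ↔
      IsMinimalNonAvoiding p τ ∧ NOcc p ρ = s := by
  constructor
  · rintro ⟨hN, hend⟩
    have hτ := (firstOccurrenceEnd_append_eq_iff (by rw [← nOcc_eq_zero_iff hm]; omega)).1 hend
    exact ⟨hτ, by have := nOcc_append_of_isMinimalNonAvoiding hm hτ (ρ := ρ); omega⟩
  · rintro ⟨hτ, hN⟩
    have hN' : NOcc p (Fin.append τ ρ) = s + 1 := by
      rw [nOcc_append_of_isMinimalNonAvoiding hm hτ, hN]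
    exact ⟨hN', (firstOccurrenceEnd_append_eq_iff (by rw [← nOcc_eq_zero_iff hm]; omega)).2 hτ⟩

lemma isMinimalNonAvoiding_append_one_iff {c : Fin 1 → Fin k} :
    IsMinimalNonAvoiding p (Fin.append τ c) ↔
      AvoidsPat p τ ∧ ¬ AvoidsPat p (Fin.append τ c) := by
  refine and_comm.trans (and_congr_left' ⟨fun hend i hi => ?_, fun hτ i hi => ?_⟩)
  · have := hend i ((occursAt_append_left_iff hi.1).2 hi)
    have := hi.1
    omega
  · by_contra hlt
    exact hτ i ((occursAt_append_left_iff (by omega)).1 hi)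

end Append

noncomputable def avoidCount (p : Fin m → Fin l) (k n : ℕ) : ℕ :=
  Nat.card {σ : Fin n → Fin k // AvoidsPat p σ}

noncomputable def occCount (p : Fin m → Fin l) (k n s : ℕ) : ℕ :=
  Nat.card {σ : Fin n → Fin k // NOcc p σ = s}

noncomputable def minimalCount (p : Fin m → Fin l) (k a : ℕ) : ℕ :=
  Nat.card {τ : Fin a → Fin k // IsMinimalNonAvoiding p τ}

lemma avoidCount_zero (hm : 0 < m) : avoidCount p k 0 = 1 := by
  rw [avoidCount, Nat.card_eq_one_iff_unique]
  exact ⟨inferInstance, ⟨⟨Fin.elim0, avoidsPat_of_length_lt hm _⟩⟩⟩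

lemma minimalCount_zero (hm : 0 < m) : minimalCount p k 0 = 0 := by
  rw [minimalCount, Nat.card_eq_zero]
  exact Or.inl ⟨fun τ => τ.2.1 (avoidsPat_of_length_lt hm _)⟩

lemma occCount_zero (hm : 0 < m) (n : ℕ) : occCount p k n 0 = avoidCount p k n :=
  Nat.card_congr (Equiv.subtypeEquivRight fun σ => nOcc_eq_zero_iff hm σ)

lemma mul_avoidCount (j : ℕ) :
    k * avoidCount p k j = avoidCount p k (j + 1) + minimalCount p k (j + 1) := by
  let e := Fin.appendEquiv (α := Fin k) j 1
  have hprefix : Nat.card {x : (Fin j → Fin k) × (Fin 1 → Fin k) // AvoidsPat p x.1} =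
      k * avoidCount p k j := by
    rw [Nat.card_congr Equiv.prodSubtypeFstEquivSubtypeProd, Nat.card_prod, avoidCount]
    simp [mul_comm]
  rw [← hprefix, Nat.card_subtype_eq_card_and_add_card_and_not _ fun x => AvoidsPat p (e x),
    avoidCount, minimalCount]
  congr 1
  · exact Nat.card_congr <|
      Equiv.subtypeEquiv e fun x => ⟨And.right, fun h => ⟨AvoidsPat.of_append h, h⟩⟩
  · exact Nat.card_congr <| Equiv.subtypeEquiv e fun x => isMinimalNonAvoiding_append_one_iff.symm

lemma card_nOcc_eq_succ_and_firstOccurrenceEnd_eq (hm : 0 < m) {a b n : ℕ} (h : a + b = n)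
    (s : ℕ) :
    Nat.card {σ : Fin n → Fin k // NOcc p σ = s + 1 ∧ firstOccurrenceEnd p σ = a} =
      minimalCount p k a * occCount p k b s := by
  subst h
  rw [minimalCount, occCount, ← Nat.card_prod]
  exact Nat.card_congr <| (Equiv.subtypeProdEquivProd.symm.trans <|
    Equiv.subtypeEquiv (Fin.appendEquiv a b) fun x =>
      (nOcc_append_eq_succ_and_firstOccurrenceEnd_eq_iff hm).symm).symm

lemma occCount_succ (hm : 0 < m) (n s : ℕ) :
    occCount p k n (s + 1) =
      ∑ a ∈ Finset.range (n + 1), minimalCount p k a * occCount p k (n - a) s := by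
  have hend : ∀ σ : Fin n → Fin k, NOcc p σ = s + 1 → firstOccurrenceEnd p σ ≤ n :=
    fun σ hσ => firstOccurrenceEnd_le (by rw [← nOcc_eq_zero_iff hm]; omega)
  rw [occCount, Nat.card_subtype_eq_sum_range _ _ hend]
  exact Finset.sum_congr rfl fun a ha =>
    card_nOcc_eq_succ_and_firstOccurrenceEnd_eq hm (by rw [Finset.mem_range] at ha; omega) s

open MvPowerSeries BivariateSeries

lemma AbarPat_eq_xSeries : AbarPat p k = xSeries fun n => (avoidCount p k n : ℚ) := rfl

lemma coeff_bideg_Fgen (n s : ℕ) : coeff (bideg n s) (Fgen p k) = occCount p k n s := by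
  change (Nat.card {σ : Fin (bideg n s 0) → Fin k // NOcc p σ = bideg n s 1} : ℚ) = _
  rw [bideg_apply_zero, bideg_apply_one, occCount]

lemma xSeries_minimalCount (hm : 0 < m) :
    xSeries (fun a => (minimalCount p k a : ℚ)) =
      ((k : MvPowerSeries (Fin 2) ℚ) * X 0 - 1) * AbarPat p k + 1 := by
  refine ext_bideg fun n s => ?_
  rw [sub_mul, one_mul, mul_assoc, ← map_natCast C, map_add, map_sub, coeff_C_mul, coeff_one,
    AbarPat_eq_xSeries, coeff_bideg_xSeries, coeff_bideg_xSeries]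
  rcases n with _ | n
  · rw [coeff_bideg_zero_X_zero_mul]
    rcases s with _ | s <;> simp [bideg_eq_zero_iff, minimalCount_zero hm, avoidCount_zero hm]
  · rw [coeff_bideg_succ_X_zero_mul, coeff_bideg_xSeries]
    rcases s with _ | s
    · have : (k * avoidCount p k n : ℚ) = avoidCount p k (n + 1) + minimalCount p k (n + 1) := by
        exact_mod_cast mul_avoidCount n
      simp only [if_true, bideg_eq_zero_iff, Nat.add_one_ne_zero, false_and, if_false, add_zero]
      linear_combination -this
    · simp [bideg_eq_zero_iff]

lemma Fgen_eq_AbarPat_add (hm : 0 < m) :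
    Fgen p k = AbarPat p k + X 1 * (xSeries (fun a => (minimalCount p k a : ℚ)) * Fgen p k) := by
  refine ext_bideg fun n s => ?_
  rw [map_add, AbarPat_eq_xSeries, coeff_bideg_xSeries, coeff_bideg_Fgen]
  rcases s with _ | s
  · rw [coeff_bideg_zero_X_one_mul, occCount_zero hm]
    simp
  · rw [coeff_bideg_succ_X_one_mul, coeff_bideg_xSeries_mul, occCount_succ hm,
      Finset.Nat.sum_antidiagonal_eq_sum_range_succ_mk]
    simp [coeff_bideg_Fgen]

end SubwordPattern

theorem stmt18_general (m l : ℕ) (hm : 1 ≤ m) (p : Fin m → Fin l) (k : ℕ) :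
    Fgen p k *
        (1 - MvPowerSeries.X (1 : Fin 2) *
          (((k : MvPowerSeries (Fin 2) ℚ) * MvPowerSeries.X (0 : Fin 2) - 1) *
              AbarPat p k + 1)) =
      AbarPat p k := by
  rw [← SubwordPattern.xSeries_minimalCount hm]
  linear_combination SubwordPattern.Fgen_eq_AbarPat_add hm

theorem stmt18 (m l : ℕ) (hm : 1 ≤ m) (p : Fin m → Fin l) (k : ℕ) (hk : 1 ≤ k) :
    Fgen p k *
        (1 - MvPowerSeries.X (1 : Fin 2) *
          (((k : MvPowerSeries (Fin 2) ℚ) * MvPowerSeries.X (0 : Fin 2) - 1) *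
              AbarPat p k + 1)) =
      AbarPat p k :=
  stmt18_general m l hm p k
end

section
/- Let k ≥ 1 and s ≥ 0. For a word σ : Fin n → Fin k let N₁₂(σ) be the maximum number of pairwise non-overlapping occurrences of the pattern 12, i.e., the largest t such that there exist indices i₁ < i₂ < … < i_t with i_j + 2 ≤ i_{j+1} for j < t and σ(i_j) < σ(i_j + 1) for all j. Then in ℚ[[x]]: (1 − x)^{k·(s+1)} · Σ_{n≥0} #{σ : Fin n → Fin k | N₁₂(σ) = s}·xⁿ = ((k·x − 1) + (1 − x)^k)^s. -/
/-!
Cut a word that has an ascent right after its first ascent: `σ = u τ`, where `u` is weakly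
decreasing except for the ascent formed by its last two letters. Taking the first ascent is the
greedy choice, so `N₁₂(σ) = N₁₂(τ) + 1`. Writing `A_s` for the generating function of words with
`N₁₂ = s` and `C` for that of the blocks `u`, this gives `A_{s+1} = C A_s`. Words with `N₁₂ = 0`
are the weakly decreasing ones, i.e. multisets, so `A_0 = (1 - x)^{-k}`; cutting every word with
an ascent in the same way gives `1 / (1 - k x) = A_0 + C / (1 - k x)`, whence
`(1 - x)^k C = (k x - 1) + (1 - x)^k`.
-/

/-- `σ` has `t` pairwise non-overlapping occurrences of the pattern 12 (ascents at
positions `i₁ < i₂ < ⋯` with `i_j + 2 ≤ i_{j+1}`). -/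
def Has12Chain {n k : ℕ} (σ : Fin n → Fin k) (t : ℕ) : Prop :=
  ∃ i : Fin t → ℕ,
    (∀ (j : Fin t) (h : (j : ℕ) + 1 < t), i j + 2 ≤ i ⟨(j : ℕ) + 1, h⟩) ∧
      ∀ j : Fin t, ∃ h : i j + 1 < n,
        σ ⟨i j, Nat.lt_of_succ_lt h⟩ < σ ⟨i j + 1, h⟩

/-- `N₁₂(σ)`: the maximum number of pairwise non-overlapping occurrences of 12 in `σ`. -/
noncomputable def N12 {n k : ℕ} (σ : Fin n → Fin k) : ℕ :=
  sSup {t : ℕ | Has12Chain σ t}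


theorem Nat.card_antitone_fin_eq_card_sym (α : Type*) [LinearOrder α] (n : ℕ) :
    Nat.card {σ : Fin n → α // Antitone σ} = Nat.card (Sym α n) := by
  refine Nat.card_congr (Equiv.ofBijective (fun σ => ⟨List.ofFn σ.1, by simp⟩) ⟨?_, ?_⟩)
  · rintro ⟨σ, hσ⟩ ⟨τ, hτ⟩ h
    have hperm : (List.ofFn σ).Perm (List.ofFn τ) := Multiset.coe_eq_coe.1 (congrArg Subtype.val h)
    refine Subtype.ext (List.ofFn_injective (hperm.eq_of_pairwise' (r := (· ≥ ·)) ?_ ?_))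
    · exact List.pairwise_ofFn.2 fun _ _ hij => hσ hij.le
    · exact List.pairwise_ofFn.2 fun _ _ hij => hτ hij.le
  · rintro ⟨s, rfl⟩
    obtain ⟨l, hl, rfl⟩ : ∃ l : List α, l.Pairwise (· ≥ ·) ∧ (l : Multiset α) = s :=
      ⟨_, Multiset.pairwise_sort s (· ≥ ·), Multiset.sort_eq s (· ≥ ·)⟩
    refine ⟨⟨fun i => l.get (Fin.cast (Multiset.coe_card l) i), ?_⟩, ?_⟩
    · exact antitone_iff_forall_lt.2 fun i j hij => List.pairwise_iff_get.1 hl _ _ hij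
    · apply Subtype.ext
      simp

namespace PowerSeries

variable {R : Type*} [CommRing R]

lemma coeff_mk_mul_mk (a b : ℕ → R) (n : ℕ) :
    coeff n (mk a * mk b) = ∑ m ∈ Finset.range (n + 1), a m * b (n - m) := by
  rw [coeff_mul, Finset.Nat.sum_antidiagonal_eq_sum_range_succ_mk]
  simp only [coeff_mk]

lemma one_sub_C_mul_X_mul_mk_pow (a : R) : (1 - C a * X) * mk (a ^ ·) = 1 := by
  have h := congrArg (rescale a) (mk_one_mul_one_sub_eq_one R)
  rw [map_mul, map_sub, map_one, rescale_X, mul_comm] at h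
  convert h using 2
  ext n
  simp

lemma one_sub_X_pow_mul_mk_multichoose (k : ℕ) :
    (1 - X : R⟦X⟧) ^ k * mk (fun n => (k.multichoose n : R)) = 1 := by
  cases k with
  | zero =>
    ext (_ | n) <;> simp [coeff_one]
  | succ d =>
    have h : (fun n => ((d + 1).multichoose n : R)) = fun n => ((d + n).choose d : R) := by
      funext n
      rw [Nat.multichoose_eq, Nat.add_right_comm, Nat.add_sub_cancel, Nat.choose_symm_add]
    rw [h, mul_comm]
    exact mk_add_choose_mul_one_sub_pow_eq_one R d

end PowerSeries

namespace Word

variable {k n : ℕ}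

def Asc (σ : Fin n → Fin k) (i : ℕ) : Prop :=
  ∃ h : i + 1 < n, σ ⟨i, Nat.lt_of_succ_lt h⟩ < σ ⟨i + 1, h⟩

def IsFirstAsc (σ : Fin n → Fin k) (p : ℕ) : Prop :=
  Asc σ p ∧ ∀ q < p, ¬ Asc σ q

lemma IsFirstAsc.unique {σ : Fin n → Fin k} {p q : ℕ} (hp : IsFirstAsc σ p)
    (hq : IsFirstAsc σ q) : p = q := by
  by_contra hne
  rcases Nat.lt_or_gt_of_ne hne with h | h
  · exact hq.2 p h hp.1
  · exact hp.2 q h hq.1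

lemma exists_isFirstAsc {σ : Fin n → Fin k} {i : ℕ} (hi : Asc σ i) : ∃ p, IsFirstAsc σ p := by
  classical
  have h : ∃ i, Asc σ i := ⟨i, hi⟩
  exact ⟨Nat.find h, Nat.find_spec h, fun _ => Nat.find_min h⟩

lemma antitone_iff_forall_not_asc {σ : Fin n → Fin k} : Antitone σ ↔ ∀ i, ¬ Asc σ i := by
  cases n with
  | zero => exact iff_of_true (Subsingleton.antitone σ) fun i ⟨h, _⟩ => by omega
  | succ n =>
    rw [Fin.antitone_iff_succ_le]
    constructor
    · rintro h i ⟨hi, hlt⟩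
      exact (h ⟨i, by omega⟩).not_gt hlt
    · exact fun h i => not_lt.1 fun hlt => h i ⟨by omega, hlt⟩

lemma has12Chain_succ_iff_castSucc {σ : Fin n → Fin k} {t : ℕ} :
    Has12Chain σ (t + 1) ↔
      ∃ i : Fin (t + 1) → ℕ, (∀ j : Fin t, i j.castSucc + 2 ≤ i j.succ) ∧ ∀ j, Asc σ (i j) :=
  ⟨fun ⟨i, hgap, hasc⟩ => ⟨i, fun j => hgap j.castSucc (by simp), hasc⟩,
    fun ⟨i, hgap, hasc⟩ => ⟨i, fun j hj => hgap ⟨j, by omega⟩, hasc⟩⟩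

lemma Has12Chain.le_length {σ : Fin n → Fin k} {t : ℕ} (hc : Has12Chain σ t) : t ≤ n := by
  cases t with
  | zero => exact Nat.zero_le n
  | succ t =>
    obtain ⟨i, hgap, hasc⟩ := has12Chain_succ_iff_castSucc.1 hc
    have hmono : StrictMono i := Fin.strictMono_iff_lt_succ.2 fun j => by have := hgap j; omega
    have hinj : Function.Injective fun j => (⟨i j, Nat.lt_of_succ_lt (hasc j).1⟩ : Fin n) :=
      fun a b h => hmono.injective (congrArg Fin.val h)
    simpa using Fintype.card_le_of_injective _ hinj

lemma has12Chain_zero (σ : Fin n → Fin k) : Has12Chain σ 0 :=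
  ⟨Fin.elim0, fun j => j.elim0, fun j => j.elim0⟩

lemma bddAbove_has12Chain (σ : Fin n → Fin k) : BddAbove {t | Has12Chain σ t} :=
  ⟨n, fun _ => Has12Chain.le_length⟩

lemma has12Chain_N12 (σ : Fin n → Fin k) : Has12Chain σ (N12 σ) :=
  Nat.sSup_mem ⟨0, has12Chain_zero σ⟩ (bddAbove_has12Chain σ)

lemma le_N12 {σ : Fin n → Fin k} {t : ℕ} (h : Has12Chain σ t) : t ≤ N12 σ :=
  le_csSup (bddAbove_has12Chain σ) h

def drop (σ : Fin n → Fin k) (m : ℕ) : Fin (n - m) → Fin k :=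
  fun j => σ ⟨m + j, by omega⟩

lemma asc_drop_iff {σ : Fin n → Fin k} {m j : ℕ} : Asc (drop σ m) j ↔ Asc σ (m + j) :=
  ⟨fun ⟨_, hlt⟩ => ⟨by omega, hlt⟩, fun ⟨_, hlt⟩ => ⟨by omega, hlt⟩⟩

lemma IsFirstAsc.has12Chain_succ_iff {σ : Fin n → Fin k} {p t : ℕ} (hp : IsFirstAsc σ p) :
    Has12Chain σ (t + 1) ↔ Has12Chain (drop σ (p + 2)) t := by
  rw [has12Chain_succ_iff_castSucc]
  constructor
  · rintro ⟨i, hgap, hasc⟩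
    have hle : ∀ j, p ≤ i j := fun j => not_lt.1 fun h => hp.2 _ h (hasc j)
    have hsucc : ∀ j : Fin t, p + 2 + (i j.succ - (p + 2)) = i j.succ := fun j => by
      have := hgap j; have := hle j.castSucc; omega
    refine ⟨fun j => i j.succ - (p + 2), fun j hj => ?_, fun j => ?_⟩
    · have h₁ : i j.succ + 2 ≤ i (Fin.succ ⟨j + 1, hj⟩) := hgap ⟨j + 1, hj⟩
      have h₂ := hsucc j
      show i j.succ - (p + 2) + 2 ≤ i (Fin.succ ⟨j + 1, hj⟩) - (p + 2)
      omega
    · exact asc_drop_iff.2 (by rw [hsucc]; exact hasc j.succ)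
  · rintro ⟨i, hgap, hasc⟩
    refine ⟨Fin.cons p fun j => p + 2 + i j, fun j => ?_, fun j => ?_⟩
    · rcases j with ⟨_ | j, hj⟩
      · show p + 2 ≤ p + 2 + i ⟨0, hj⟩
        omega
      · show p + 2 + i ⟨j, by omega⟩ + 2 ≤ p + 2 + i ⟨j + 1, hj⟩
        have : i ⟨j, by omega⟩ + 2 ≤ i ⟨j + 1, hj⟩ := hgap ⟨j, by omega⟩ hj
        omega
    · cases j using Fin.cases with
      | zero => exact hp.1
      | succ j => simpa using asc_drop_iff.1 (hasc j)

lemma IsFirstAsc.N12_eq {σ : Fin n → Fin k} {p : ℕ} (hp : IsFirstAsc σ p) :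
    N12 σ = N12 (drop σ (p + 2)) + 1 := by
  have hge := le_N12 (hp.has12Chain_succ_iff.2 (has12Chain_N12 (drop σ (p + 2))))
  obtain ⟨t, ht⟩ : ∃ t, N12 σ = t + 1 := ⟨N12 σ - 1, by omega⟩
  have hle := le_N12 (hp.has12Chain_succ_iff.1 (ht ▸ has12Chain_N12 σ))
  omega

lemma N12_eq_succ_iff {σ : Fin n → Fin k} {s : ℕ} :
    N12 σ = s + 1 ↔ ∃ p, IsFirstAsc σ p ∧ N12 (drop σ (p + 2)) = s := by
  constructor
  · intro h
    obtain ⟨i, -, hasc⟩ := has12Chain_succ_iff_castSucc.1 (h ▸ has12Chain_N12 σ)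
    obtain ⟨p, hp⟩ := exists_isFirstAsc (hasc 0)
    exact ⟨p, hp, by rw [hp.N12_eq] at h; omega⟩
  · rintro ⟨p, hp, rfl⟩
    exact hp.N12_eq

lemma N12_ne_zero_iff {σ : Fin n → Fin k} : N12 σ ≠ 0 ↔ ∃ p, IsFirstAsc σ p := by
  constructor
  · intro h
    obtain ⟨s, hs⟩ := Nat.exists_eq_succ_of_ne_zero h
    obtain ⟨p, hp, -⟩ := N12_eq_succ_iff.1 hs
    exact ⟨p, hp⟩
  · rintro ⟨p, hp⟩
    rw [hp.N12_eq]
    exact Nat.succ_ne_zero _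

lemma N12_eq_zero_iff_antitone {σ : Fin n → Fin k} : N12 σ = 0 ↔ Antitone σ := by
  rw [antitone_iff_forall_not_asc, ← not_iff_not, ← Ne, N12_ne_zero_iff, not_forall_not]
  exact ⟨fun ⟨p, hp⟩ => ⟨p, hp.1⟩, fun ⟨_, hi⟩ => exists_isFirstAsc hi⟩

def take (σ : Fin n → Fin k) {m : ℕ} (hm : m ≤ n) : Fin m → Fin k :=
  fun i => σ (Fin.castLE hm i)

def append {m : ℕ} (hm : m ≤ n) (u : Fin m → Fin k) (τ : Fin (n - m) → Fin k) : Fin n → Fin k :=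
  fun i => if h : (i : ℕ) < m then u ⟨i, h⟩ else τ ⟨i - m, by omega⟩

section Append

variable {m : ℕ} (hm : m ≤ n) (u : Fin m → Fin k) (τ : Fin (n - m) → Fin k)

lemma take_append : take (append hm u τ) hm = u :=
  funext fun i => dif_pos i.2

lemma drop_append : drop (append hm u τ) m = τ :=
  funext fun j => by simp [drop, append]

lemma append_take_drop (σ : Fin n → Fin k) : append hm (take σ hm) (drop σ m) = σ := by
  funext i
  by_cases h : (i : ℕ) < m
  · simp [append, take, h]
  · simp only [append, drop, h, dite_false]
    congr
    omega

end Append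

lemma asc_take_iff {σ : Fin n → Fin k} {m j : ℕ} (hm : m ≤ n) (hj : j + 1 < m) :
    Asc (take σ hm) j ↔ Asc σ j :=
  ⟨fun ⟨_, hlt⟩ => ⟨by omega, hlt⟩, fun ⟨_, hlt⟩ => ⟨hj, hlt⟩⟩

lemma isFirstAsc_take_iff {σ : Fin n → Fin k} {m p : ℕ} (hm : m ≤ n) (hp : p + 1 < m) :
    IsFirstAsc (take σ hm) p ↔ IsFirstAsc σ p := by
  refine and_congr (asc_take_iff hm hp) (forall₂_congr fun q hq => ?_)
  rw [asc_take_iff hm (by omega)]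

lemma isFirstAsc_append {m : ℕ} (hm : m ≤ n) {u : Fin m → Fin k} (τ : Fin (n - m) → Fin k)
    (hu : IsFirstAsc u (m - 2)) : IsFirstAsc (append hm u τ) (m - 2) := by
  rw [← isFirstAsc_take_iff hm hu.1.1, take_append]
  exact hu

lemma card_exists_isFirstAsc (Q : ∀ {j : ℕ}, (Fin j → Fin k) → Prop) :
    Nat.card {σ : Fin n → Fin k // ∃ p, IsFirstAsc σ p ∧ Q (drop σ (p + 2))} =
      ∑ m ∈ Finset.range (n + 1), Nat.card {u : Fin m → Fin k // IsFirstAsc u (m - 2)} *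
        Nat.card {τ : Fin (n - m) → Fin k // Q τ} := by
  let f : (Σ m : Fin (n + 1), {u : Fin m → Fin k // IsFirstAsc u (m - 2)} ×
      {τ : Fin (n - m) → Fin k // Q τ}) →
      {σ : Fin n → Fin k // ∃ p, IsFirstAsc σ p ∧ Q (drop σ (p + 2))} :=
    fun ⟨m, u, τ⟩ => ⟨append (Nat.lt_succ_iff.1 m.2) u τ, m - 2,
      isFirstAsc_append _ τ.1 u.2, by
        rw [Nat.sub_add_cancel (by have := u.2.1.1; omega), drop_append]
        exact τ.2⟩
  have hf : Function.Bijective f := by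
    constructor
    · rintro ⟨m, u, τ⟩ ⟨m', u', τ'⟩ h
      have happ : append (Nat.lt_succ_iff.1 m.2) u.1 τ.1 =
          append (Nat.lt_succ_iff.1 m'.2) u'.1 τ'.1 := congrArg Subtype.val h
      have hfirst :=
        (isFirstAsc_append _ τ.1 u.2).unique (happ ▸ isFirstAsc_append _ τ'.1 u'.2)
      obtain rfl : m = m' := Fin.ext (by have := u.2.1.1; have := u'.2.1.1; omega)
      have hu := take_append (Nat.lt_succ_iff.1 m.2) u.1 τ.1
      have hτ := drop_append (Nat.lt_succ_iff.1 m.2) u.1 τ.1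
      rw [happ, take_append] at hu
      rw [happ, drop_append] at hτ
      simp only [Sigma.mk.injEq, heq_eq_eq, true_and]
      exact Prod.ext (Subtype.ext hu.symm) (Subtype.ext hτ.symm)
    · rintro ⟨σ, p, hp, hQ⟩
      have hpn : p + 2 ≤ n := hp.1.1
      refine ⟨⟨⟨p + 2, by omega⟩, ⟨take σ hpn, ?_⟩, ⟨drop σ (p + 2), hQ⟩⟩,
        Subtype.ext (append_take_drop hpn σ)⟩
      rw [Nat.add_sub_cancel, isFirstAsc_take_iff hpn (by omega)]
      exact hp
  rw [← Nat.card_congr (Equiv.ofBijective f hf), Nat.card_sigma, ← Fin.sum_univ_eq_sum_range]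
  simp only [Nat.card_prod]

section GeneratingFunctions

open PowerSeries

variable (k)

noncomputable def n12GF (s : ℕ) : ℚ⟦X⟧ :=
  mk fun n => Nat.card {σ : Fin n → Fin k // N12 σ = s}

-- Words whose only ascent is at their last two letters; for `m < 2` there are none, although
-- `m - 2 = 0`.
noncomputable def firstAscBlockGF : ℚ⟦X⟧ :=
  mk fun m => Nat.card {u : Fin m → Fin k // IsFirstAsc u (m - 2)}

lemma one_sub_X_pow_mul_n12GF_zero : (1 - X) ^ k * n12GF k 0 = 1 := by
  convert one_sub_X_pow_mul_mk_multichoose (R := ℚ) k using 2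
  ext n
  simp only [n12GF, coeff_mk, N12_eq_zero_iff_antitone]
  rw [Nat.card_antitone_fin_eq_card_sym, Sym.natCard_sym_eq_multichoose, Nat.card_fin]

lemma n12GF_succ (s : ℕ) : n12GF k (s + 1) = firstAscBlockGF k * n12GF k s := by
  ext n
  rw [firstAscBlockGF, n12GF, n12GF, coeff_mk_mul_mk, coeff_mk]
  simp only [N12_eq_succ_iff]
  rw [card_exists_isFirstAsc (fun τ => N12 τ = s)]
  push_cast
  rfl

lemma mk_pow_eq_n12GF_zero_add :
    mk ((k : ℚ) ^ ·) = n12GF k 0 + firstAscBlockGF k * mk ((k : ℚ) ^ ·) := by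
  ext n
  have hsplit := Nat.card_congr (Equiv.sumCompl fun σ : Fin n → Fin k => N12 σ = 0).symm
  have hpos : Nat.card {σ : Fin n → Fin k // ¬ N12 σ = 0} =
      ∑ m ∈ Finset.range (n + 1), Nat.card {u : Fin m → Fin k // IsFirstAsc u (m - 2)} *
        k ^ (n - m) := by
    have h := card_exists_isFirstAsc (k := k) (n := n) (fun _ => True)
    simp only [and_true, ← N12_ne_zero_iff] at h
    simpa using h
  rw [Nat.card_sum, hpos, Nat.card_fun, Nat.card_fin, Nat.card_fin] at hsplit
  rw [map_add, n12GF, firstAscBlockGF, coeff_mk_mul_mk, coeff_mk, coeff_mk]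
  exact_mod_cast hsplit

lemma one_sub_X_pow_mul_firstAscBlockGF :
    (1 - X) ^ k * firstAscBlockGF k = ((k : ℚ⟦X⟧) * X - 1) + (1 - X) ^ k := by
  have hgeom := one_sub_C_mul_X_mul_mk_pow (k : ℚ)
  rw [map_natCast] at hgeom
  have hsplit := mk_pow_eq_n12GF_zero_add k
  have hzero := one_sub_X_pow_mul_n12GF_zero k
  linear_combination (-((1 - (k : ℚ⟦X⟧) * X) * (1 - X) ^ k)) * hsplit +
    ((1 - X) ^ k * (1 - firstAscBlockGF k)) * hgeom - (1 - (k : ℚ⟦X⟧) * X) * hzero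

end GeneratingFunctions

end Word

theorem stmt19_general (k s : ℕ) :
    (1 - PowerSeries.X) ^ (k * (s + 1)) *
        (PowerSeries.mk fun n => (Nat.card {σ : Fin n → Fin k // N12 σ = s} : ℚ)) =
      (((k : PowerSeries ℚ) * PowerSeries.X - 1) + (1 - PowerSeries.X) ^ k) ^ s := by
  change (1 - PowerSeries.X) ^ (k * (s + 1)) * Word.n12GF k s = _
  induction s with
  | zero => simpa using Word.one_sub_X_pow_mul_n12GF_zero k
  | succ s ih =>
    calc (1 - PowerSeries.X) ^ (k * (s + 1 + 1)) * Word.n12GF k (s + 1)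
        = ((1 - PowerSeries.X) ^ k * Word.firstAscBlockGF k) *
            ((1 - PowerSeries.X) ^ (k * (s + 1)) * Word.n12GF k s) := by
          rw [Word.n12GF_succ]
          ring
      _ = _ := by
          rw [Word.one_sub_X_pow_mul_firstAscBlockGF, ih]
          ring

theorem stmt19 (k s : ℕ) (hk : 1 ≤ k) :
    (1 - PowerSeries.X) ^ (k * (s + 1)) *
        (PowerSeries.mk fun n => (Nat.card {σ : Fin n → Fin k // N12 σ = s} : ℚ)) =
      (((k : PowerSeries ℚ) * PowerSeries.X - 1) + (1 - PowerSeries.X) ^ k) ^ s :=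
  stmt19_general k s
end
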